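/- Context lemma for λ_S: contextual equivalence, evaluation-context-based contextual equivalence, and applicative bisimilarity all coincide: ≡C = ≡E = ≈. -/

import Mathlib

namespace LamS

/-- Terms of the λ-calculus with shift and reset, in de Bruijn representation.
    `lam` and `shift` bind variable 0. -/
inductive Tm : Type
  | var : ℕ → Tm
  | lam : Tm → Tm
  | app : Tm → Tm → Tm
  | shift : Tm → Tm
  | reset : Tm → Tm
  deriving DecidableEq

open Tm

/-- Lift (shift up) free de Bruijn indices `≥ c` by `d`. -/
def liftT (d : ℕ) : ℕ → Tm → Tm
  | c, var n => if n < c then var n else var (n + d)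
  | c, lam t => lam (liftT d (c+1) t)
  | c, app a b => app (liftT d c a) (liftT d c b)
  | c, shift t => shift (liftT d (c+1) t)
  | c, reset t => reset (liftT d c t)

/-- Capture-avoiding substitution `t[j := s]` (de Bruijn). -/
def substT : ℕ → Tm → Tm → Tm
  | j, s, var n => if n = j then liftT j 0 s else if j < n then var (n-1) else var n
  | j, s, lam t => lam (substT (j+1) s t)
  | j, s, app a b => app (substT j s a) (substT j s b)
  | j, s, shift t => shift (substT (j+1) s t)
  | j, s, reset t => reset (substT j s t)

/-- Values are λ-abstractions. -/
def IsValue (t : Tm) : Prop := ∃ b, t = lam b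

/-- All free variables are `< n`. -/
def ClosedUnder : ℕ → Tm → Prop
  | n, var m => m < n
  | n, lam t => ClosedUnder (n+1) t
  | n, app a b => ClosedUnder n a ∧ ClosedUnder n b
  | n, shift t => ClosedUnder (n+1) t
  | n, reset t => ClosedUnder n t

def Closed (t : Tm) : Prop := ClosedUnder 0 t

/-- Pure evaluation contexts, interpreted inside-out:
    `appV b E` is `E[(λ.b) []]` and `appL E t` is `E[[] t]`. -/
inductive PCtx : Type
  | hole : PCtx
  | appV : Tm → PCtx → PCtx
  | appL : PCtx → Tm → PCtx
  deriving DecidableEq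

def PCtx.plug : PCtx → Tm → Tm
  | .hole, t => t
  | .appV b E, t => E.plug (app (lam b) t)
  | .appL E s, t => E.plug (app t s)

def PCtx.liftC (d : ℕ) : ℕ → PCtx → PCtx
  | _, .hole => .hole
  | c, .appV b E => .appV (liftT d (c+1) b) (PCtx.liftC d c E)
  | c, .appL E s => .appL (PCtx.liftC d c E) (liftT d c s)

/-- Composition of pure contexts: `(E.comp E').plug t = E.plug (E'.plug t)`. -/
def PCtx.comp : PCtx → PCtx → PCtx
  | E, .hole => E
  | E, .appV b E' => .appV b (E.comp E')
  | E, .appL E' s => .appL (E.comp E') s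

/-- The captured delimited continuation `λx.⟨E[x]⟩`. -/
def contOf (E : PCtx) : Tm := lam (reset ((PCtx.liftC 1 0 E).plug (var 0)))

/-- Call-by-value evaluation contexts, interpreted inside-out. -/
inductive ECtx : Type
  | hole : ECtx
  | appV : Tm → ECtx → ECtx
  | appL : ECtx → Tm → ECtx
  | resetC : ECtx → ECtx
  deriving DecidableEq

def ECtx.plug : ECtx → Tm → Tm
  | .hole, t => t
  | .appV b F, t => F.plug (app (lam b) t)
  | .appL F s, t => F.plug (app t s)
  | .resetC F, t => F.plug (reset t)

def ClosedECtx : ECtx → Prop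
  | .hole => True
  | .appV b F => ClosedUnder 1 b ∧ ClosedECtx F
  | .appL F s => ClosedECtx F ∧ Closed s
  | .resetC F => ClosedECtx F

/-- One-step reduction of λ_S. -/
inductive Red : Tm → Tm → Prop
  | beta (F : ECtx) (t v : Tm) (hv : IsValue v) :
      Red (F.plug (app (lam t) v)) (F.plug (substT 0 v t))
  | cap (F : ECtx) (E : PCtx) (t : Tm) :
      Red (F.plug (reset (E.plug (shift t)))) (F.plug (reset (substT 0 (contOf E) t)))
  | res (F : ECtx) (v : Tm) (hv : IsValue v) :
      Red (F.plug (reset v)) (F.plug v)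

def RedStar : Tm → Tm → Prop := Relation.ReflTransGen Red

/-- A term is stuck if it is not a value and cannot reduce. -/
def Stuck (t : Tm) : Prop := ¬ IsValue t ∧ ∀ u, ¬ Red t u

/-- Evaluation: reduce to an irreducible term. -/
def Eval (t t' : Tm) : Prop := RedStar t t' ∧ ∀ u, ¬ Red t' u

def IsRedex (r : Tm) : Prop :=
  (∃ t v, IsValue v ∧ r = app (lam t) v) ∨
  (∃ E s, r = reset (PCtx.plug E (shift s))) ∨
  (∃ v, IsValue v ∧ r = reset v)

/-- Labels of the LTS. -/
inductive Label : Type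
  | tau : Label
  | val : Tm → Label
  | ctx : PCtx → Label

/-- The labelled transition system for λ_S. -/
inductive Step : Tm → Label → Tm → Prop
  | beta {t v : Tm} (hv : IsValue v) :
      Step (app (lam t) v) .tau (substT 0 v t)
  | resetVal {v : Tm} (hv : IsValue v) :
      Step (reset v) .tau v
  | appL {t0 t0' t1 : Tm} :
      Step t0 .tau t0' → Step (app t0 t1) .tau (app t0' t1)
  | appR {v t t' : Tm} (hv : IsValue v) :
      Step t .tau t' → Step (app v t) .tau (app v t')
  | resetT {t t' : Tm} :
      Step t .tau t' → Step (reset t) .tau (reset t')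
  | resetCap {t t' : Tm} :
      Step t (.ctx .hole) t' → Step (reset t) .tau t'
  | lamApp {t v : Tm} (hv : IsValue v) :
      Step (lam t) (.val v) (substT 0 v t)
  | shiftCap {t : Tm} (E : PCtx) :
      Step (shift t) (.ctx E) (reset (substT 0 (contOf E) t))
  | capL {t0 t0' t1 : Tm} {E : PCtx} :
      Step t0 (.ctx (.appL E t1)) t0' → Step (app t0 t1) (.ctx E) t0'
  | capR {b t t' : Tm} {E : PCtx} :
      Step t (.ctx (.appV b E)) t' → Step (app (lam b) t) (.ctx E) t'

def TauStar : Tm → Tm → Prop := Relation.ReflTransGen (fun a b => Step a .tau b)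

/-- Weak delay transition: τ-steps, then an `l`-step if `l ≠ τ`. -/
def Weak (t : Tm) (l : Label) (t' : Tm) : Prop :=
  match l with
  | .tau => TauStar t t'
  | _ => ∃ u, TauStar t u ∧ Step u l t'

/-- Applicative simulation. -/
def IsSim (R : Tm → Tm → Prop) : Prop :=
  ∀ ⦃t0 t1⦄, R t0 t1 → ∀ ⦃l t0'⦄, Step t0 l t0' →
    ∃ t1', Weak t1 l t1' ∧ R t0' t1'

def IsBisim (R : Tm → Tm → Prop) : Prop := IsSim R ∧ IsSim (flip R)

/-- Applicative bisimilarity: the largest applicative bisimulation. -/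
def Bisim (t0 t1 : Tm) : Prop := ∃ R, IsBisim R ∧ R t0 t1

/-- Big-step applicative simulation. -/
def IsBigSim (R : Tm → Tm → Prop) : Prop :=
  ∀ ⦃t0 t1⦄, R t0 t1 → ∀ ⦃l t0'⦄, l ≠ Label.tau → Weak t0 l t0' →
    ∃ t1', Weak t1 l t1' ∧ R t0' t1'

def IsBigBisim (R : Tm → Tm → Prop) : Prop := IsBigSim R ∧ IsBigSim (flip R)

/-- Big-step applicative bisimilarity. -/
def BigBisim (t0 t1 : Tm) : Prop := ∃ R, IsBigBisim R ∧ R t0 t1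

/-- General contexts. -/
inductive Ctx : Type
  | hole : Ctx
  | lam : Ctx → Ctx
  | appL : Ctx → Tm → Ctx
  | appR : Tm → Ctx → Ctx
  | shift : Ctx → Ctx
  | reset : Ctx → Ctx

/-- Plugging a term in a general context (free variables may be captured). -/
def Ctx.plug : Ctx → Tm → Tm
  | .hole, t => t
  | .lam C, t => Tm.lam (C.plug t)
  | .appL C s, t => Tm.app (C.plug t) s
  | .appR s C, t => Tm.app s (C.plug t)
  | .shift C, t => Tm.shift (C.plug t)
  | .reset C, t => Tm.reset (C.plug t)

def CtxClosedUnder : ℕ → Ctx → Prop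
  | _, .hole => True
  | n, .lam C => CtxClosedUnder (n+1) C
  | n, .appL C s => CtxClosedUnder n C ∧ ClosedUnder n s
  | n, .appR s C => ClosedUnder n s ∧ CtxClosedUnder n C
  | n, .shift C => CtxClosedUnder (n+1) C
  | n, .reset C => CtxClosedUnder n C

def ClosedCtx (C : Ctx) : Prop := CtxClosedUnder 0 C

def EvalsToValue (t : Tm) : Prop := ∃ v, IsValue v ∧ Eval t v

def EvalsToStuck (t : Tm) : Prop := ∃ s, Stuck s ∧ Eval t s

/-- Contextual equivalence on closed terms. -/
def CtxEquiv (t0 t1 : Tm) : Prop :=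
  ∀ C : Ctx, ClosedCtx C →
    (EvalsToValue (C.plug t0) ↔ EvalsToValue (C.plug t1)) ∧
    (EvalsToStuck (C.plug t0) ↔ EvalsToStuck (C.plug t1))

/-- Contextual equivalence restricted to evaluation contexts. -/
def ECtxEquiv (t0 t1 : Tm) : Prop :=
  ∀ F : ECtx, ClosedECtx F →
    (EvalsToValue (F.plug t0) ↔ EvalsToValue (F.plug t1)) ∧
    (EvalsToStuck (F.plug t0) ↔ EvalsToStuck (F.plug t1))

/-- Lifting a substitution under a binder. -/
def liftSub (σ : ℕ → Tm) : ℕ → Tm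
  | 0 => var 0
  | n+1 => liftT 1 0 (σ n)

/-- Apply a substitution to all free variables of a term. -/
def applySub (σ : ℕ → Tm) : Tm → Tm
  | var n => σ n
  | lam t => lam (applySub (liftSub σ) t)
  | app a b => app (applySub σ a) (applySub σ b)
  | shift t => shift (applySub (liftSub σ) t)
  | reset t => reset (applySub σ t)

/-- A closing substitution maps every variable to a closed value. -/
def ClosingSub (σ : ℕ → Tm) : Prop := ∀ n, IsValue (σ n) ∧ Closed (σ n)

/-- Open extension of a relation on closed terms. -/
def OpenExt (R : Tm → Tm → Prop) (t0 t1 : Tm) : Prop :=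
  ∀ σ, ClosingSub σ → R (applySub σ t0) (applySub σ t1)

/-- Howe's closure of applicative bisimilarity (compatible refinement rules inlined). -/
inductive Howe : Tm → Tm → Prop
  | base {t0 t1} : OpenExt Bisim t0 t1 → Howe t0 t1
  | right {t0 t2 t1} : Howe t0 t2 → OpenExt Bisim t2 t1 → Howe t0 t1
  | compVar (n : ℕ) : Howe (var n) (var n)
  | compLam {t0 t1} : Howe t0 t1 → Howe (lam t0) (lam t1)
  | compApp {a0 a1 b0 b1} : Howe a0 a1 → Howe b0 b1 → Howe (app a0 b0) (app a1 b1)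
  | compShift {t0 t1} : Howe t0 t1 → Howe (shift t0) (shift t1)
  | compReset {t0 t1} : Howe t0 t1 → Howe (reset t0) (reset t1)

/-- Howe's closure restricted to closed terms. -/
def HoweC (t0 t1 : Tm) : Prop := Closed t0 ∧ Closed t1 ∧ Howe t0 t1

/-- Extension of Howe's closure to pure contexts. -/
inductive PCtxHowe : PCtx → PCtx → Prop
  | hole : PCtxHowe .hole .hole
  | appV {b0 b1 E0 E1} : Howe b0 b1 → PCtxHowe E0 E1 → PCtxHowe (.appV b0 E0) (.appV b1 E1)
  | appL {E0 E1 t0 t1} : PCtxHowe E0 E1 → Howe t0 t1 → PCtxHowe (.appL E0 t0) (.appL E1 t1)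

/-- Extension of Howe's closure to labels. -/
def LabHowe : Label → Label → Prop
  | .tau, .tau => True
  | .val v0, .val v1 => Closed v0 ∧ Closed v1 ∧ Howe v0 v1
  | .ctx E0, .ctx E1 => PCtxHowe E0 E1
  | _, _ => False

/-- ω = λx. x x -/
def omegaTm : Tm := lam (app (var 0) (var 0))

/-- Ω = ω ω, the standard diverging term. -/
def OmegaTm : Tm := app omegaTm omegaTm

/-- Every τ-reachable term can do a τ-step: only infinite τ-sequences. -/
def Diverges (t : Tm) : Prop := ∀ u, TauStar t u → ∃ u', Step u .tau u'

/-- No weak non-τ transition. -/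
def NoObs (t : Tm) : Prop := ∀ l t', l ≠ Label.tau → ¬ Weak t l t'

end LamS

/-!
Soundness, `≈ ⊆ ≡C`, is Howe's method. Howe's closure of (the open extension of) bisimilarity
is compatible and contains `≈`; since it is substitutive for values, a rule induction over the
LTS shows that on closed terms and closed labels it is simulated by weak transitions. It
therefore preserves termination at a value and at a stuck term `E[shift s]`, and plugging
bisimilar terms into a context gives terms related by it.

Completeness, `≡E ⊆ ≈`, shows that `≈ ∘ ≡E ∘ ≈` on closed terms is a bisimulation. `≡E` is
invariant under reduction, so a value or a stuck term reached on one side is matched on the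
other; applying both λ-abstractions to the same value, or capturing both stuck terms in the same
context under a reset, keeps them `≡E`-related. Labels may contain free variables, which `≡E`
cannot test, but replacing the free variables of a term by `Ω` yields a bisimilar term.

Finally `≡C ⊆ ≡E` because every evaluation context is a context.
-/

namespace LamS
open Tm

section Substitution

def liftRen (ρ : ℕ → ℕ) : ℕ → ℕ
  | 0 => 0
  | n+1 => ρ n + 1

def renT (ρ : ℕ → ℕ) : Tm → Tm
  | var n => var (ρ n)
  | lam t => lam (renT (liftRen ρ) t)
  | app a b => app (renT ρ a) (renT ρ b)
  | shift t => shift (renT (liftRen ρ) t)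
  | reset t => reset (renT ρ t)

lemma liftRen_cutoff (d c : ℕ) :
    liftRen (fun n => if n < c then n else n + d) = fun n => if n < c + 1 then n else n + d := by
  funext n
  cases n with
  | zero => simp [liftRen]
  | succ n => simp only [liftRen]; split <;> split <;> omega

lemma liftT_eq_renT (d c : ℕ) (t : Tm) :
    liftT d c t = renT (fun n => if n < c then n else n + d) t := by
  induction t generalizing c with
  | var n => simp only [liftT, renT]; split <;> rfl
  | lam t ih | shift t ih => simp only [liftT, renT, ih, liftRen_cutoff]
  | app a b iha ihb => simp only [liftT, renT, iha, ihb]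
  | reset t ih => simp only [liftT, renT, ih]

lemma liftT_one_zero (t : Tm) : liftT 1 0 t = renT (· + 1) t := by
  simp [liftT_eq_renT]

lemma liftRen_comp (ρ₂ ρ₁ : ℕ → ℕ) :
    liftRen (fun n => ρ₂ (ρ₁ n)) = fun n => liftRen ρ₂ (liftRen ρ₁ n) := by
  funext n; cases n <;> rfl

lemma renT_renT (ρ₂ ρ₁ : ℕ → ℕ) (t : Tm) :
    renT ρ₂ (renT ρ₁ t) = renT (fun n => ρ₂ (ρ₁ n)) t := by
  induction t generalizing ρ₁ ρ₂ with
  | var n => rfl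
  | lam t ih | shift t ih => simp only [renT, ih, liftRen_comp]
  | app a b iha ihb => simp only [renT, iha, ihb]
  | reset t ih => simp only [renT, ih]

lemma renT_id (t : Tm) : renT id t = t := by
  induction t with
  | var n => rfl
  | lam t ih | shift t ih =>
      have : liftRen id = id := by funext n; cases n <;> rfl
      simp only [renT, this, ih]
  | app a b iha ihb => simp only [renT, iha, ihb]
  | reset t ih => simp only [renT, ih]

lemma liftT_zero (c : ℕ) (t : Tm) : liftT 0 c t = t := by
  have : (fun n => if n < c then n else n + 0) = id := by funext n; simp
  rw [liftT_eq_renT, this, renT_id]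

lemma liftSub_renT_comp (σ : ℕ → Tm) (ρ : ℕ → ℕ) :
    liftSub (fun n => σ (ρ n)) = fun n => liftSub σ (liftRen ρ n) := by
  funext n; cases n <;> rfl

lemma applySub_renT (σ : ℕ → Tm) (ρ : ℕ → ℕ) (t : Tm) :
    applySub σ (renT ρ t) = applySub (fun n => σ (ρ n)) t := by
  induction t generalizing σ ρ with
  | var n => rfl
  | lam t ih | shift t ih => simp only [renT, applySub, ih, liftSub_renT_comp]
  | app a b iha ihb => simp only [renT, applySub, iha, ihb]
  | reset t ih => simp only [renT, applySub, ih]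

lemma renT_liftSub_comp (ρ : ℕ → ℕ) (σ : ℕ → Tm) :
    (fun n => renT (liftRen ρ) (liftSub σ n)) = liftSub (fun n => renT ρ (σ n)) := by
  funext n
  cases n with
  | zero => rfl
  | succ n => simp only [liftSub, liftT_one_zero, renT_renT]; rfl

lemma renT_applySub (ρ : ℕ → ℕ) (σ : ℕ → Tm) (t : Tm) :
    renT ρ (applySub σ t) = applySub (fun n => renT ρ (σ n)) t := by
  induction t generalizing σ ρ with
  | var n => rfl
  | lam t ih | shift t ih => simp only [renT, applySub, ih, renT_liftSub_comp]
  | app a b iha ihb => simp only [renT, applySub, iha, ihb]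
  | reset t ih => simp only [renT, applySub, ih]

lemma applySub_liftSub_comp (σ₂ σ₁ : ℕ → Tm) :
    (fun n => applySub (liftSub σ₂) (liftSub σ₁ n)) = liftSub (fun n => applySub σ₂ (σ₁ n)) := by
  funext n
  cases n with
  | zero => rfl
  | succ n => simp only [liftSub, liftT_one_zero, renT_applySub, applySub_renT]

lemma applySub_applySub (σ₂ σ₁ : ℕ → Tm) (t : Tm) :
    applySub σ₂ (applySub σ₁ t) = applySub (fun n => applySub σ₂ (σ₁ n)) t := by
  induction t generalizing σ₁ σ₂ with
  | var n => rfl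
  | lam t ih | shift t ih => simp only [applySub, ih, applySub_liftSub_comp]
  | app a b iha ihb => simp only [applySub, iha, ihb]
  | reset t ih => simp only [applySub, ih]

lemma applySub_var (t : Tm) : applySub var t = t := by
  induction t with
  | var n => rfl
  | lam t ih | shift t ih =>
      have : liftSub var = var := by funext n; cases n <;> rfl
      simp only [applySub, this, ih]
  | app a b iha ihb => simp only [applySub, iha, ihb]
  | reset t ih => simp only [applySub, ih]

def substSub (j : ℕ) (s : Tm) (n : ℕ) : Tm :=
  if n = j then liftT j 0 s else if j < n then var (n - 1) else var n

lemma liftSub_substSub (j : ℕ) (s : Tm) : liftSub (substSub j s) = substSub (j + 1) s := by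
  funext n
  cases n with
  | zero => simp [liftSub, substSub]
  | succ n =>
      simp only [liftSub, substSub, Nat.add_right_cancel_iff, Nat.add_lt_add_iff_right]
      split_ifs with h1 h2
      · subst h1; simp only [liftT_eq_renT, renT_renT]; congr 1
      · simp [liftT]; omega
      · simp [liftT]

lemma substT_eq_applySub (j : ℕ) (s t : Tm) : substT j s t = applySub (substSub j s) t := by
  induction t generalizing j with
  | var n => rfl
  | lam t ih | shift t ih => simp only [substT, applySub, ih, liftSub_substSub]
  | app a b iha ihb => simp only [substT, applySub, iha, ihb]
  | reset t ih => simp only [substT, applySub, ih]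

end Substitution

section Closedness

lemma closedUnder_mono {t : Tm} {n m : ℕ} (h : n ≤ m) (ht : ClosedUnder n t) :
    ClosedUnder m t := by
  induction t generalizing n m with
  | var k => simp only [ClosedUnder] at *; omega
  | lam t ih | shift t ih => exact ih (by omega) ht
  | app a b iha ihb => exact ⟨iha h ht.1, ihb h ht.2⟩
  | reset t ih => exact ih h ht

lemma Closed.closedUnder {t : Tm} (ht : Closed t) (n : ℕ) : ClosedUnder n t :=
  closedUnder_mono (Nat.zero_le n) ht

lemma liftT_of_closedUnder {t : Tm} {c : ℕ} (d : ℕ) (ht : ClosedUnder c t) : liftT d c t = t := by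
  induction t generalizing c with
  | var k => simp only [ClosedUnder] at ht; simp [liftT, ht]
  | lam t ih | shift t ih => simp [liftT, ih ht]
  | app a b iha ihb => simp [liftT, iha ht.1, ihb ht.2]
  | reset t ih => simp [liftT, ih ht]

lemma closedUnder_liftT {t : Tm} {n c : ℕ} (d : ℕ) (hc : c ≤ n) (ht : ClosedUnder n t) :
    ClosedUnder (n + d) (liftT d c t) := by
  induction t generalizing n c with
  | var k => simp only [ClosedUnder, liftT] at *; split <;> simp only [ClosedUnder] <;> omega
  | lam t ih | shift t ih =>
      simpa [liftT, ClosedUnder, Nat.add_right_comm] using ih (c := c + 1) (by omega) ht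
  | app a b iha ihb => exact ⟨iha hc ht.1, ihb hc ht.2⟩
  | reset t ih => exact ih hc ht

lemma substT_of_closedUnder {t : Tm} {j : ℕ} (s : Tm) (ht : ClosedUnder j t) :
    substT j s t = t := by
  induction t generalizing j with
  | var k =>
      simp only [ClosedUnder] at ht
      simp only [substT]
      rw [if_neg (by omega), if_neg (by omega)]
  | lam t ih | shift t ih => simp [substT, ih ht]
  | app a b iha ihb => simp [substT, iha ht.1, ihb ht.2]
  | reset t ih => simp [substT, ih ht]

lemma closedUnder_substT {t s : Tm} {j : ℕ} (ht : ClosedUnder (j + 1) t) (hs : Closed s) :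
    ClosedUnder j (substT j s t) := by
  induction t generalizing j with
  | var k =>
      simp only [ClosedUnder, substT] at *
      split_ifs with h
      · simpa using closedUnder_liftT (n := 0) j le_rfl hs
      · simp only [ClosedUnder]; omega
      · simp only [ClosedUnder]; omega
  | lam t ih | shift t ih => exact ih ht
  | app a b iha ihb => exact ⟨iha ht.1, ihb ht.2⟩
  | reset t ih => exact ih ht

lemma applySub_congr_of_closedUnder {t : Tm} {k : ℕ} {σ σ' : ℕ → Tm} (ht : ClosedUnder k t)
    (h : ∀ n < k, σ n = σ' n) : applySub σ t = applySub σ' t := by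
  induction t generalizing k σ σ' with
  | var n => exact h n ht
  | lam t ih | shift t ih =>
      simp only [applySub]
      congr 1
      refine ih ht fun n hn => ?_
      cases n with
      | zero => rfl
      | succ n => simp only [liftSub, h n (by omega)]
  | app a b iha ihb => simp only [applySub, iha ht.1 h, ihb ht.2 h]
  | reset t ih => simp only [applySub, ih ht h]

lemma applySub_of_closedUnder {t : Tm} {k : ℕ} {σ : ℕ → Tm} (ht : ClosedUnder k t)
    (h : ∀ n < k, σ n = var n) : applySub σ t = t := by
  rw [applySub_congr_of_closedUnder ht h, applySub_var]

lemma applySub_of_closed {t : Tm} (ht : Closed t) (σ : ℕ → Tm) : applySub σ t = t :=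
  applySub_of_closedUnder ht (by omega)

lemma applySub_eq_substT {t : Tm} (ht : ClosedUnder 1 t) (σ : ℕ → Tm) :
    applySub σ t = substT 0 (σ 0) t := by
  rw [substT_eq_applySub]
  refine applySub_congr_of_closedUnder ht fun n hn => ?_
  obtain rfl : n = 0 := by omega
  simp [substSub, liftT_zero]

lemma closedUnder_applySub (t : Tm) {k : ℕ} {σ : ℕ → Tm} (h : ∀ n, ClosedUnder k (σ n)) :
    ClosedUnder k (applySub σ t) := by
  induction t generalizing k σ with
  | var n => exact h n
  | lam t ih | shift t ih =>
      refine ih fun n => ?_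
      cases n with
      | zero => simp [liftSub, ClosedUnder]
      | succ n => exact closedUnder_liftT (c := 0) 1 (Nat.zero_le k) (h n)
  | app a b iha ihb => exact ⟨iha h, ihb h⟩
  | reset t ih => exact ih h

lemma closed_applySub {σ : ℕ → Tm} (h : ClosingSub σ) (t : Tm) : Closed (applySub σ t) :=
  closedUnder_applySub t fun n => (h n).2

lemma applySub_substT (σ : ℕ → Tm) (j : ℕ) (w t : Tm) :
    applySub σ (substT j w t) =
      applySub (fun n => if n = j then applySub σ (liftT j 0 w)
        else if j < n then σ (n - 1) else σ n) t := by
  rw [substT_eq_applySub, applySub_applySub]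
  congr 1
  funext n
  simp only [substSub]
  split_ifs <;> rfl

lemma IsValue.applySub {v : Tm} (hv : IsValue v) (σ : ℕ → Tm) : IsValue (applySub σ v) := by
  obtain ⟨b, rfl⟩ := hv; exact ⟨_, rfl⟩

lemma IsValue.liftT {v : Tm} (hv : IsValue v) (d c : ℕ) : IsValue (liftT d c v) := by
  obtain ⟨b, rfl⟩ := hv; exact ⟨_, rfl⟩

end Closedness

section Contexts

def ECtx.comp (F : ECtx) : ECtx → ECtx
  | .hole => F
  | .appV b G => .appV b (F.comp G)
  | .appL G s => .appL (F.comp G) s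
  | .resetC G => .resetC (F.comp G)

lemma ECtx.plug_comp (F G : ECtx) (t : Tm) : (F.comp G).plug t = F.plug (G.plug t) := by
  induction G generalizing t with
  | hole => rfl
  | appV _ _ ih | appL _ _ ih | resetC _ ih => exact ih _

lemma PCtx.plug_comp (E G : PCtx) (t : Tm) : (E.comp G).plug t = E.plug (G.plug t) := by
  induction G generalizing t with
  | hole => rfl
  | appV _ _ ih | appL _ _ ih => exact ih _

lemma PCtx.hole_comp (E : PCtx) : PCtx.hole.comp E = E := by
  induction E with
  | hole => rfl
  | appV b E ih | appL E b ih => simp [PCtx.comp, ih]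

lemma PCtx.comp_assoc (A B C : PCtx) : (A.comp B).comp C = A.comp (B.comp C) := by
  induction C with
  | hole => rfl
  | appV b C ih | appL C b ih => simp [PCtx.comp, ih]

def PCtx.toECtx : PCtx → ECtx
  | .hole => .hole
  | .appV b E => .appV b E.toECtx
  | .appL E s => .appL E.toECtx s

lemma PCtx.toECtx_plug (E : PCtx) (t : Tm) : E.toECtx.plug t = E.plug t := by
  induction E generalizing t with
  | hole => rfl
  | appV _ _ ih | appL _ _ ih => exact ih _

lemma ClosedECtx.comp {F G : ECtx} (hF : ClosedECtx F) (hG : ClosedECtx G) :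
    ClosedECtx (F.comp G) := by
  induction G with
  | hole => exact hF
  | appV b G ih => exact ⟨hG.1, ih hG.2⟩
  | appL G s ih => exact ⟨ih hG.1, hG.2⟩
  | resetC G ih => exact ih hG

def PCtxClosedUnder : ℕ → PCtx → Prop
  | _, .hole => True
  | k, .appV b E => ClosedUnder (k + 1) b ∧ PCtxClosedUnder k E
  | k, .appL E s => PCtxClosedUnder k E ∧ ClosedUnder k s

lemma closedUnder_plug_iff (E : PCtx) (a : Tm) (k : ℕ) :
    ClosedUnder k (E.plug a) ↔ PCtxClosedUnder k E ∧ ClosedUnder k a := by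
  induction E generalizing a with
  | hole => simp [PCtx.plug, PCtxClosedUnder]
  | appV b E ih =>
      simp only [PCtx.plug, ih, PCtxClosedUnder, ClosedUnder]
      tauto
  | appL E s ih =>
      simp only [PCtx.plug, ih, PCtxClosedUnder, ClosedUnder]
      tauto

lemma PCtxClosedUnder.comp {k : ℕ} {E F : PCtx} (hE : PCtxClosedUnder k E)
    (hF : PCtxClosedUnder k F) : PCtxClosedUnder k (E.comp F) := by
  induction F with
  | hole => exact hE
  | appV b F ih => exact ⟨hF.1, ih hF.2⟩
  | appL F s ih => exact ⟨ih hF.1, hF.2⟩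

lemma PCtxClosedUnder.liftC {E : PCtx} {k c : ℕ} (d : ℕ) (hc : c ≤ k)
    (hE : PCtxClosedUnder k E) : PCtxClosedUnder (k + d) (E.liftC d c) := by
  induction E with
  | hole => trivial
  | appV b E ih =>
      refine ⟨?_, ih hE.2⟩
      simpa [Nat.add_right_comm] using closedUnder_liftT (c := c + 1) d (by omega) hE.1
  | appL E s ih => exact ⟨ih hE.1, closedUnder_liftT d hc hE.2⟩

lemma PCtxClosedUnder.toECtx {E : PCtx} (h : PCtxClosedUnder 0 E) : ClosedECtx E.toECtx := by
  induction E with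
  | hole => trivial
  | appV b E ih => exact ⟨h.1, ih h.2⟩
  | appL E s ih => exact ⟨ih h.1, h.2⟩

lemma closed_contOf {E : PCtx} (h : PCtxClosedUnder 0 E) : Closed (contOf E) := by
  show ClosedUnder 1 ((E.liftC 1 0).plug (var 0))
  rw [closedUnder_plug_iff]
  exact ⟨by simpa using h.liftC 1 le_rfl, by simp [ClosedUnder]⟩

lemma Closed.ectx_plug_inv {F : ECtx} {a : Tm} (hF : Closed (F.plug a)) :
    Closed a ∧ ∀ b, Closed b → Closed (F.plug b) := by
  induction F generalizing a with
  | hole => exact ⟨hF, fun b hb => hb⟩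
  | appV c F ih =>
      obtain ⟨h1, h2⟩ := ih hF
      exact ⟨h1.2, fun b hb => h2 _ ⟨h1.1, hb⟩⟩
  | appL F s ih =>
      obtain ⟨h1, h2⟩ := ih hF
      exact ⟨h1.1, fun b hb => h2 _ ⟨hb, h1.2⟩⟩
  | resetC F ih =>
      obtain ⟨h1, h2⟩ := ih hF
      exact ⟨h1, fun b hb => h2 _ hb⟩

end Contexts

section Transitions

lemma Red.plug {t u : Tm} (F : ECtx) (h : Red t u) : Red (F.plug t) (F.plug u) := by
  cases h <;> rw [← ECtx.plug_comp, ← ECtx.plug_comp] <;> constructor <;> assumption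

lemma Step.ectx_plug_tau (F : ECtx) {t t' : Tm} (h : Step t .tau t') :
    Step (F.plug t) .tau (F.plug t') := by
  induction F generalizing t t' with
  | hole => exact h
  | appV b F ih => exact ih (.appR ⟨b, rfl⟩ h)
  | appL F s ih => exact ih (.appL h)
  | resetC F ih => exact ih (.resetT h)

lemma Step.pctx_plug_ctx (E : PCtx) {E₀ : PCtx} {r u : Tm} (h : Step r (.ctx (E₀.comp E)) u) :
    Step (E.plug r) (.ctx E₀) u := by
  induction E generalizing r with
  | hole => exact h
  | appV b E ih => exact ih (.capR h)
  | appL E s ih => exact ih (.capL h)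

lemma step_plug_shift (E₀ : PCtx) (s : Tm) (E : PCtx) :
    Step (E₀.plug (shift s)) (.ctx E) (reset (substT 0 (contOf (E.comp E₀)) s)) :=
  Step.pctx_plug_ctx E₀ (.shiftCap _)

lemma step_ctx_inv {t u : Tm} {E : PCtx} (h : Step t (.ctx E) u) :
    ∃ E₀ s, t = E₀.plug (shift s) ∧ u = reset (substT 0 (contOf (E.comp E₀)) s) := by
  generalize hl : Label.ctx E = l at h
  induction h generalizing E with
  | shiftCap => cases hl; exact ⟨.hole, _, rfl, rfl⟩
  | @capL t0 t0' t1 E' h ih =>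
      cases hl
      obtain ⟨E₀, s, rfl, rfl⟩ := ih rfl
      refine ⟨PCtx.comp (.appL .hole t1) E₀, s, by rw [PCtx.plug_comp]; rfl, ?_⟩
      rw [← PCtx.comp_assoc]; rfl
  | @capR b t t' E' h ih =>
      cases hl
      obtain ⟨E₀, s, rfl, rfl⟩ := ih rfl
      refine ⟨PCtx.comp (.appV b .hole) E₀, s, by rw [PCtx.plug_comp]; rfl, ?_⟩
      rw [← PCtx.comp_assoc]; rfl
  | _ => cases hl

lemma step_val_inv {t v u : Tm} (h : Step t (.val v) u) :
    ∃ b, t = lam b ∧ IsValue v ∧ u = substT 0 v b := by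
  generalize hl : Label.val v = l at h
  cases h <;> cases hl
  exact ⟨_, rfl, by assumption, rfl⟩

lemma value_no_tau {t u : Tm} (hv : IsValue t) : ¬ Step t .tau u := by
  obtain ⟨b, rfl⟩ := hv; rintro ⟨⟩

lemma value_no_ctx {t u : Tm} {E : PCtx} (hv : IsValue t) : ¬ Step t (.ctx E) u := by
  obtain ⟨b, rfl⟩ := hv; rintro ⟨⟩

lemma app_not_value {a b : Tm} : ¬ IsValue (app a b) := by rintro ⟨c, ⟨⟩⟩

lemma PCtx.plug_no_tau (E : PCtx) {r : Tm} (hr : ¬ IsValue r) (hτ : ∀ u, ¬ Step r .tau u) :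
    (∀ u, ¬ Step (E.plug r) .tau u) ∧ ¬ IsValue (E.plug r) := by
  induction E generalizing r with
  | hole => exact ⟨hτ, hr⟩
  | appV b E ih =>
      refine ih app_not_value fun u h => ?_
      cases h with
      | beta hv => exact hr hv
      | appL h => exact value_no_tau ⟨b, rfl⟩ h
      | appR _ h => exact hτ _ h
  | appL E s ih =>
      refine ih app_not_value fun u h => ?_
      cases h with
      | beta => exact hr ⟨_, rfl⟩
      | appL h => exact hτ _ h
      | appR hv => exact hr hv

lemma plug_shift_no_tau (E : PCtx) (s : Tm) :
    (∀ u, ¬ Step (E.plug (shift s)) .tau u) ∧ ¬ IsValue (E.plug (shift s)) :=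
  E.plug_no_tau (by rintro ⟨c, ⟨⟩⟩) (by rintro u ⟨⟩)

lemma no_tau_of_step_ctx {t u u' : Tm} {E : PCtx} (h : Step t (.ctx E) u) :
    ¬ Step t .tau u' := by
  obtain ⟨E₀, s, rfl, -⟩ := step_ctx_inv h
  exact (plug_shift_no_tau E₀ s).1 u'

lemma Red.step_tau {t u : Tm} (h : Red t u) : Step t .tau u := by
  cases h with
  | beta F t v hv => exact Step.ectx_plug_tau F (.beta hv)
  | cap F E t =>
      refine Step.ectx_plug_tau F (.resetCap ?_)
      simpa [PCtx.hole_comp] using step_plug_shift E t .hole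
  | res F v hv => exact Step.ectx_plug_tau F (.resetVal hv)

lemma Step.red {t u : Tm} (h : Step t .tau u) : Red t u := by
  generalize hl : Label.tau = l at h
  induction h with
  | beta hv => exact .beta .hole _ _ hv
  | resetVal hv => exact .res .hole _ hv
  | appL _ ih => exact (ih hl).plug (.appL .hole _)
  | appR hv _ ih =>
      obtain ⟨b, rfl⟩ := hv
      exact (ih hl).plug (.appV b .hole)
  | resetT _ ih => exact (ih hl).plug (.resetC .hole)
  | resetCap h =>
      obtain ⟨E₀, s, rfl, rfl⟩ := step_ctx_inv h
      rw [PCtx.hole_comp]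
      exact .cap .hole _ _
  | _ => cases hl

lemma step_tau_iff_red {t u : Tm} : Step t .tau u ↔ Red t u := ⟨Step.red, Red.step_tau⟩

lemma tauStar_iff_redStar {t u : Tm} : TauStar t u ↔ RedStar t u := by
  simp only [TauStar, RedStar, step_tau_iff_red]

lemma step_det {t u u' : Tm} {l : Label} (h : Step t l u) (h' : Step t l u') : u = u' := by
  induction h generalizing u' with
  | beta hv =>
      cases h' with
      | beta => rfl
      | appL h' => exact absurd h' (value_no_tau ⟨_, rfl⟩)
      | appR _ h' => exact absurd h' (value_no_tau hv)
  | resetVal hv =>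
      cases h' with
      | resetVal => rfl
      | resetT h' => exact absurd h' (value_no_tau hv)
      | resetCap h' => exact absurd h' (value_no_ctx hv)
  | appL h ih =>
      cases h' with
      | beta => exact absurd h (value_no_tau ⟨_, rfl⟩)
      | appL h' => rw [ih h']
      | appR hv' => exact absurd h (value_no_tau hv')
  | appR hv h ih =>
      cases h' with
      | beta hv' => exact absurd h (value_no_tau hv')
      | appL h' => exact absurd h' (value_no_tau hv)
      | appR _ h' => rw [ih h']
  | resetT h ih =>
      cases h' with
      | resetVal hv' => exact absurd h (value_no_tau hv')
      | resetT h' => rw [ih h']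
      | resetCap h' => exact absurd h (no_tau_of_step_ctx h')
  | resetCap h ih =>
      cases h' with
      | resetVal hv' => exact absurd h (value_no_ctx hv')
      | resetT h' => exact absurd h' (no_tau_of_step_ctx h)
      | resetCap h' => exact ih h'
  | lamApp | shiftCap => cases h'; rfl
  | capL h ih =>
      cases h' with
      | capL h' => exact ih h'
      | capR => exact absurd h (value_no_ctx ⟨_, rfl⟩)
  | capR h ih =>
      cases h' with
      | capL h' => exact absurd h' (value_no_ctx ⟨_, rfl⟩)
      | capR h' => exact ih h'

lemma red_det {t u u' : Tm} (h : Red t u) (h' : Red t u') : u = u' :=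
  step_det h.step_tau h'.step_tau

end Transitions

section Evaluation

def Irred (t : Tm) : Prop := ∀ u, ¬ Red t u

lemma RedStar.eq_of_irred {a b : Tm} (h : RedStar a b) (ha : Irred a) : a = b := by
  rcases h.cases_head with h | ⟨c, hc, -⟩
  · exact h
  · exact absurd hc (ha c)

lemma RedStar.to_irred {t u x : Tm} (hu : RedStar t u) (hx : RedStar t x) (hirr : Irred x) :
    RedStar u x := by
  induction hu with
  | refl => exact hx
  | tail _ hstep ih =>
      rcases ih.cases_head with rfl | ⟨c, hc, hcx⟩
      · exact absurd hstep (hirr _)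
      · rwa [red_det hstep hc]

lemma RedStar.irred_det {t a b : Tm} (ha : RedStar t a) (hirr_a : Irred a) (hb : RedStar t b)
    (hirr_b : Irred b) : a = b :=
  (ha.to_irred hb hirr_b).eq_of_irred hirr_a

lemma eval_iff_of_redStar {t u x : Tm} (h : RedStar t u) : Eval t x ↔ Eval u x :=
  ⟨fun ⟨hx, hirr⟩ => ⟨h.to_irred hx hirr, hirr⟩, fun ⟨hx, hirr⟩ => ⟨h.trans hx, hirr⟩⟩

lemma evalsToValue_iff_of_redStar {t u : Tm} (h : RedStar t u) :
    EvalsToValue t ↔ EvalsToValue u := by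
  simp only [EvalsToValue, eval_iff_of_redStar h]

lemma evalsToStuck_iff_of_redStar {t u : Tm} (h : RedStar t u) :
    EvalsToStuck t ↔ EvalsToStuck u := by
  simp only [EvalsToStuck, eval_iff_of_redStar h]

lemma IsValue.irred {v : Tm} (hv : IsValue v) : Irred v :=
  fun _ h => value_no_tau hv h.step_tau

lemma IsValue.evalsToValue {v : Tm} (hv : IsValue v) : EvalsToValue v :=
  ⟨v, hv, .refl, hv.irred⟩

lemma irred_plug_shift (E : PCtx) (s : Tm) : Irred (E.plug (shift s)) :=
  fun u h => (plug_shift_no_tau E s).1 u h.step_tau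

lemma stuck_plug_shift (E : PCtx) (s : Tm) : Stuck (E.plug (shift s)) :=
  ⟨(plug_shift_no_tau E s).2, irred_plug_shift E s⟩

lemma progress (t : Tm) : IsValue t ∨ (∃ u, Red t u) ∨ (∃ E s, t = PCtx.plug E (shift s)) ∨
    ∃ F n, t = ECtx.plug F (var n) := by
  induction t with
  | var n => exact .inr (.inr (.inr ⟨.hole, n, rfl⟩))
  | lam b => exact .inl ⟨b, rfl⟩
  | shift s => exact .inr (.inr (.inl ⟨.hole, s, rfl⟩))
  | app a b iha ihb =>
      rcases iha with ⟨a', rfl⟩ | ⟨u, hr⟩ | ⟨E, s, rfl⟩ | ⟨F, n, rfl⟩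
      · rcases ihb with hv | ⟨u, hr⟩ | ⟨E, s, rfl⟩ | ⟨F, n, rfl⟩
        · exact .inr (.inl ⟨_, .beta .hole a' b hv⟩)
        · exact .inr (.inl ⟨_, hr.plug (.appV a' .hole)⟩)
        · exact .inr (.inr (.inl ⟨PCtx.comp (.appV a' .hole) E, s, by rw [PCtx.plug_comp]; rfl⟩))
        · exact .inr (.inr (.inr ⟨ECtx.comp (.appV a' .hole) F, n, by rw [ECtx.plug_comp]; rfl⟩))
      · exact .inr (.inl ⟨_, hr.plug (.appL .hole b)⟩)
      · exact .inr (.inr (.inl ⟨PCtx.comp (.appL .hole b) E, s, by rw [PCtx.plug_comp]; rfl⟩))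
      · exact .inr (.inr (.inr ⟨ECtx.comp (.appL .hole b) F, n, by rw [ECtx.plug_comp]; rfl⟩))
  | reset t ih =>
      rcases ih with hv | ⟨u, hr⟩ | ⟨E, s, rfl⟩ | ⟨F, n, rfl⟩
      · exact .inr (.inl ⟨_, .res .hole t hv⟩)
      · exact .inr (.inl ⟨_, hr.plug (.resetC .hole)⟩)
      · exact .inr (.inl ⟨_, .cap .hole E s⟩)
      · exact .inr (.inr (.inr ⟨ECtx.comp (.resetC .hole) F, n, by rw [ECtx.plug_comp]; rfl⟩))

lemma Stuck.eq_plug_shift {t : Tm} (hs : Stuck t) (hc : Closed t) :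
    ∃ E s, t = PCtx.plug E (shift s) := by
  rcases progress t with hv | ⟨u, hr⟩ | h | ⟨F, n, rfl⟩
  · exact absurd hv hs.1
  · exact absurd hr (hs.2 u)
  · exact h
  · exact absurd hc.ectx_plug_inv.1 (by simp [Closed, ClosedUnder])

lemma Red.closed {t u : Tm} (h : Red t u) (hc : Closed t) : Closed u := by
  cases h with
  | beta F b v hv =>
      obtain ⟨⟨hb, hv⟩, hF⟩ := hc.ectx_plug_inv
      exact hF _ (closedUnder_substT hb hv)
  | cap F E s =>
      obtain ⟨hEs, hF⟩ := hc.ectx_plug_inv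
      obtain ⟨hE, hs⟩ := (closedUnder_plug_iff E (shift s) 0).1 hEs
      exact hF _ (closedUnder_substT hs (closed_contOf hE))
  | res F v hv =>
      obtain ⟨hv, hF⟩ := hc.ectx_plug_inv
      exact hF _ hv

lemma RedStar.closed {t u : Tm} (h : RedStar t u) (hc : Closed t) : Closed u := by
  induction h with
  | refl => exact hc
  | tail _ hstep ih => exact hstep.closed ih

lemma TauStar.closed {t u : Tm} (h : TauStar t u) (hc : Closed t) : Closed u :=
  RedStar.closed (tauStar_iff_redStar.1 h) hc

end Evaluation

section Bisimilarity

lemma Step.weak {t t' : Tm} {l : Label} (h : Step t l t') : Weak t l t' := by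
  cases l with
  | tau => exact .single h
  | val _ | ctx _ => exact ⟨t, .refl, h⟩

lemma Weak.tauStar_left {t u t' : Tm} {l : Label} (h : TauStar t u) (h' : Weak u l t') :
    Weak t l t' := by
  cases l with
  | tau => exact h.trans h'
  | val _ | ctx _ =>
      obtain ⟨w, hw, hs⟩ := h'
      exact ⟨w, h.trans hw, hs⟩

lemma IsSim.tauStar {R : Tm → Tm → Prop} (hR : IsSim R) {t0 t1 u : Tm} (h : R t0 t1)
    (hs : TauStar t0 u) : ∃ u1, TauStar t1 u1 ∧ R u u1 := by
  induction hs with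
  | refl => exact ⟨t1, .refl, h⟩
  | tail _ hstep ih =>
      obtain ⟨u1, hu1, hr⟩ := ih
      obtain ⟨u2, hu2, hr2⟩ := hR hr hstep
      exact ⟨u2, hu1.trans hu2, hr2⟩

lemma IsSim.weak {R : Tm → Tm → Prop} (hR : IsSim R) {t0 t1 t0' : Tm} {l : Label}
    (h : R t0 t1) (hs : Weak t0 l t0') : ∃ t1', Weak t1 l t1' ∧ R t0' t1' := by
  cases l with
  | tau => exact hR.tauStar h hs
  | val _ | ctx _ =>
      obtain ⟨u, hu, hstep⟩ := hs
      obtain ⟨u1, hu1, hr⟩ := hR.tauStar h hu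
      obtain ⟨t1', h1', hr'⟩ := hR hr hstep
      exact ⟨t1', .tauStar_left hu1 h1', hr'⟩

lemma IsBisim.of_symm {R : Tm → Tm → Prop} (hsymm : ∀ a b, R a b → R b a) (hsim : IsSim R) :
    IsBisim R :=
  ⟨hsim, fun a b hab l a' hs => by
    obtain ⟨t1', hw, hr⟩ := hsim (hsymm b a hab) hs
    exact ⟨t1', hw, hsymm _ _ hr⟩⟩

lemma Bisim.symm {t0 t1 : Tm} (h : Bisim t0 t1) : Bisim t1 t0 := by
  obtain ⟨R, hR, hr⟩ := h
  exact ⟨flip R, ⟨hR.2, hR.1⟩, hr⟩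

lemma bisim_isSim : IsSim Bisim := by
  rintro t0 t1 ⟨R, hR, hr⟩ l t0' hs
  obtain ⟨t1', h1, h2⟩ := hR.1 hr hs
  exact ⟨t1', h1, R, hR, h2⟩

lemma Bisim.weak {t0 t1 t0' : Tm} {l : Label} (h : Bisim t0 t1) (hs : Weak t0 l t0') :
    ∃ t1', Weak t1 l t1' ∧ Bisim t0' t1' :=
  bisim_isSim.weak h hs

lemma Bisim.refl (t : Tm) : Bisim t t :=
  ⟨Eq, .of_symm (fun _ _ => Eq.symm) (by rintro a _ rfl l a' hs; exact ⟨a', hs.weak, rfl⟩), rfl⟩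

lemma Bisim.trans {t0 t1 t2 : Tm} (h1 : Bisim t0 t1) (h2 : Bisim t1 t2) : Bisim t0 t2 := by
  refine ⟨Relation.Comp Bisim Bisim, ⟨?_, ?_⟩, t1, h1, h2⟩
  · rintro a c ⟨b, hab, hbc⟩ l a' hs
    obtain ⟨b', hwb, hab'⟩ := hab.weak hs.weak
    obtain ⟨c', hwc, hbc'⟩ := hbc.weak hwb
    exact ⟨c', hwc, b', hab', hbc'⟩
  · rintro c a ⟨b, hab, hbc⟩ l c' hs
    obtain ⟨b', hwb, hbc'⟩ := hbc.symm.weak hs.weak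
    obtain ⟨a', hwa, hab'⟩ := hab.symm.weak hwb
    exact ⟨a', hwa, b', hab'.symm, hbc'.symm⟩

end Bisimilarity

section Erasure

lemma closed_OmegaTm : Closed OmegaTm := by
  simp [Closed, OmegaTm, omegaTm, ClosedUnder]

lemma liftT_OmegaTm (d c : ℕ) : liftT d c OmegaTm = OmegaTm :=
  liftT_of_closedUnder d (closed_OmegaTm.closedUnder c)

lemma substT_OmegaTm (j : ℕ) (s : Tm) : substT j s OmegaTm = OmegaTm :=
  substT_of_closedUnder s (closed_OmegaTm.closedUnder j)

/-- `Er k a b`: `b` is `a` with some occurrences of variables that are free at binding depth `k`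
replaced by `Ω`. -/
inductive Er : ℕ → Tm → Tm → Prop
  | var (k n : ℕ) : Er k (var n) (var n)
  | varOmega {k n : ℕ} (h : k ≤ n) : Er k (var n) OmegaTm
  | lam {k a b} : Er (k + 1) a b → Er k (lam a) (lam b)
  | app {k a a' b b'} : Er k a a' → Er k b b' → Er k (app a b) (app a' b')
  | shift {k a b} : Er (k + 1) a b → Er k (shift a) (shift b)
  | reset {k a b} : Er k a b → Er k (reset a) (reset b)

inductive ErP : ℕ → PCtx → PCtx → Prop
  | hole (k : ℕ) : ErP k .hole .hole
  | appV {k b b' E E'} : Er (k + 1) b b' → ErP k E E' → ErP k (.appV b E) (.appV b' E')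
  | appL {k E E' s s'} : ErP k E E' → Er k s s' → ErP k (.appL E s) (.appL E' s')

inductive ErLbl : Label → Label → Prop
  | tau : ErLbl .tau .tau
  | val {v v'} : Er 0 v v' → ErLbl (.val v) (.val v')
  | ctx {E E'} : ErP 0 E E' → ErLbl (.ctx E) (.ctx E')

lemma Er.refl (t : Tm) (k : ℕ) : Er k t t := by
  induction t generalizing k with
  | var n => exact .var k n
  | lam t ih => exact .lam (ih _)
  | app a b iha ihb => exact .app (iha k) (ihb k)
  | shift t ih => exact .shift (ih _)
  | reset t ih => exact .reset (ih k)

lemma ErP.refl (E : PCtx) (k : ℕ) : ErP k E E := by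
  induction E with
  | hole => exact .hole k
  | appV b E ih => exact .appV (Er.refl b _) ih
  | appL E s ih => exact .appL ih (Er.refl s k)

lemma ErLbl.refl (l : Label) : ErLbl l l := by
  cases l with
  | tau => exact .tau
  | val v => exact .val (Er.refl v 0)
  | ctx E => exact .ctx (ErP.refl E 0)

lemma Er.lift {k : ℕ} {a b : Tm} (h : Er k a b) {c : ℕ} (d : ℕ) (hc : c ≤ k) :
    Er (k + d) (liftT d c a) (liftT d c b) := by
  induction h generalizing c with
  | var k n => simp only [LamS.liftT]; split <;> exact .var _ _
  | varOmega hn =>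
      simp only [LamS.liftT, liftT_OmegaTm]
      rw [if_neg (by omega)]
      exact .varOmega (by omega)
  | lam _ ih | shift _ ih =>
      constructor
      simpa [Nat.add_right_comm] using ih (c := c + 1) (by omega)
  | app _ _ ih1 ih2 => exact .app (ih1 hc) (ih2 hc)
  | reset _ ih => exact .reset (ih hc)

lemma Er.subst {K' : ℕ} {a b : Tm} (h : Er K' a b) {j K : ℕ} {v v' : Tm} (hK : K' = j + K + 1)
    (hv : Er K v v') : Er (j + K) (substT j v a) (substT j v' b) := by
  induction h generalizing j with
  | var k n =>
      simp only [LamS.substT]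
      split_ifs
      · simpa [Nat.add_comm K j] using hv.lift (c := 0) j (by omega)
      all_goals exact .var _ _
  | varOmega hn =>
      simp only [LamS.substT, substT_OmegaTm]
      rw [if_neg (by omega), if_pos (by omega)]
      exact .varOmega (by omega)
  | lam _ ih | shift _ ih =>
      constructor
      simpa [Nat.add_right_comm] using ih (j := j + 1) (by omega)
  | app _ _ ih1 ih2 => exact .app (ih1 hK) (ih2 hK)
  | reset _ ih => exact .reset (ih hK)

lemma Er.subst0 {a b v v' : Tm} (h : Er 1 a b) (hv : Er 0 v v') :
    Er 0 (substT 0 v a) (substT 0 v' b) :=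
  h.subst (by omega) hv

lemma ErP.liftC {k : ℕ} {E E' : PCtx} (h : ErP k E E') {c : ℕ} (d : ℕ) (hc : c ≤ k) :
    ErP (k + d) (E.liftC d c) (E'.liftC d c) := by
  induction h with
  | hole => exact .hole _
  | appV hb _ ih =>
      refine .appV ?_ ih
      simpa [Nat.add_right_comm] using hb.lift (c := c + 1) d (by omega)
  | appL _ hs ih => exact .appL ih (hs.lift d hc)

lemma ErP.plug {k : ℕ} {E E' : PCtx} (h : ErP k E E') {r r' : Tm} (hr : Er k r r') :
    Er k (E.plug r) (E'.plug r') := by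
  induction h generalizing r r' with
  | hole => exact hr
  | appV hb _ ih => exact ih (.app (.lam hb) hr)
  | appL _ hs ih => exact ih (.app hr hs)

lemma ErP.er_contOf {E E' : PCtx} (h : ErP 0 E E') : Er 0 (contOf E) (contOf E') :=
  .lam (.reset ((h.liftC 1 le_rfl).plug (.var 1 0)))

lemma ErP.comp {k : ℕ} {E E' F F' : PCtx} (hE : ErP k E E') (hF : ErP k F F') :
    ErP k (E.comp F) (E'.comp F') := by
  induction hF with
  | hole => exact hE
  | appV hb _ ih => exact .appV hb ih
  | appL _ hs ih => exact .appL ih hs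

lemma Er.step {a a' : Tm} {l : Label} (h : Step a l a') {b : Tm} {l' : Label} (hab : Er 0 a b)
    (hl : ErLbl l l') : ∃ b', Step b l' b' ∧ Er 0 a' b' := by
  induction h generalizing b l' with
  | beta hv =>
      obtain ⟨w, rfl⟩ := hv
      rcases hl with _ | _ | _
      rcases hab with _ | _ | _ | ⟨_ | _ | hc, _ | _ | hw⟩
      exact ⟨_, .beta ⟨_, rfl⟩, hc.subst0 (.lam hw)⟩
  | resetVal hv =>
      obtain ⟨w, rfl⟩ := hv
      rcases hl with _ | _ | _
      rcases hab with _ | _ | _ | _ | _ | (_ | _ | hw)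
      exact ⟨_, .resetVal ⟨_, rfl⟩, .lam hw⟩
  | appL _ ih =>
      rcases hl with _ | _ | _
      rcases hab with _ | _ | _ | ⟨h1, h2⟩
      obtain ⟨_, s, e⟩ := ih h1 .tau
      exact ⟨_, .appL s, .app e h2⟩
  | appR hv _ ih =>
      obtain ⟨w, rfl⟩ := hv
      rcases hl with _ | _ | _
      rcases hab with _ | _ | _ | ⟨_ | _ | hw, h2⟩
      obtain ⟨_, s, e⟩ := ih h2 .tau
      exact ⟨_, .appR ⟨_, rfl⟩ s, .app (.lam hw) e⟩
  | resetT _ ih =>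
      rcases hl with _ | _ | _
      rcases hab with _ | _ | _ | _ | _ | ⟨h1⟩
      obtain ⟨_, s, e⟩ := ih h1 .tau
      exact ⟨_, .resetT s, .reset e⟩
  | resetCap _ ih =>
      rcases hl with _ | _ | _
      rcases hab with _ | _ | _ | _ | _ | ⟨h1⟩
      obtain ⟨_, s, e⟩ := ih h1 (.ctx (.hole 0))
      exact ⟨_, .resetCap s, e⟩
  | lamApp hv =>
      obtain ⟨w, rfl⟩ := hv
      rcases hl with _ | ⟨_ | _ | hw⟩ | _
      rcases hab with _ | _ | hc
      exact ⟨_, .lamApp ⟨_, rfl⟩, hc.subst0 (.lam hw)⟩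
  | shiftCap E =>
      rcases hl with _ | _ | ⟨hE⟩
      rcases hab with _ | _ | _ | _ | ⟨hs⟩
      exact ⟨_, .shiftCap _, .reset (hs.subst0 hE.er_contOf)⟩
  | capL _ ih =>
      rcases hl with _ | _ | ⟨hE⟩
      rcases hab with _ | _ | _ | ⟨h1, h2⟩
      obtain ⟨b', s, e⟩ := ih h1 (.ctx (.appL hE h2))
      exact ⟨b', .capL s, e⟩
  | capR _ ih =>
      rcases hl with _ | _ | ⟨hE⟩
      rcases hab with _ | _ | _ | ⟨_ | _ | hc, h2⟩
      obtain ⟨b', s, e⟩ := ih h2 (.ctx (.appV hc hE))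
      exact ⟨b', .capR s, e⟩

lemma Er.step_rev {b b' : Tm} {l' : Label} (h : Step b l' b') {a : Tm} {l : Label}
    (hab : Er 0 a b) (hl : ErLbl l l') :
    (l' = .tau ∧ Er 0 a b') ∨ ∃ a', Step a l a' ∧ Er 0 a' b' := by
  induction h generalizing a l with
  | beta hv =>
      obtain ⟨w, rfl⟩ := hv
      rcases hl with _ | _ | _
      rcases hab with _ | hn | _ | ⟨_ | _ | hc, _ | _ | hw⟩
      · exact .inl ⟨rfl, .varOmega hn⟩
      · exact .inr ⟨_, .beta ⟨_, rfl⟩, hc.subst0 (.lam hw)⟩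
  | resetVal hv =>
      obtain ⟨w, rfl⟩ := hv
      rcases hl with _ | _ | _
      rcases hab with _ | _ | _ | _ | _ | (_ | _ | hw)
      exact .inr ⟨_, .resetVal ⟨_, rfl⟩, .lam hw⟩
  | appL h ih =>
      rcases hl with _ | _ | _
      rcases hab with _ | _ | _ | ⟨h1, h2⟩
      · exact absurd h (value_no_tau ⟨_, rfl⟩)
      rcases ih h1 .tau with ⟨-, e⟩ | ⟨_, s, e⟩
      · exact .inl ⟨rfl, .app e h2⟩
      · exact .inr ⟨_, .appL s, .app e h2⟩
  | appR hv h ih =>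
      obtain ⟨w, rfl⟩ := hv
      rcases hl with _ | _ | _
      rcases hab with _ | _ | _ | ⟨_ | _ | hw, h2⟩
      · exact absurd h (value_no_tau ⟨_, rfl⟩)
      rcases ih h2 .tau with ⟨-, e⟩ | ⟨_, s, e⟩
      · exact .inl ⟨rfl, .app (.lam hw) e⟩
      · exact .inr ⟨_, .appR ⟨_, rfl⟩ s, .app (.lam hw) e⟩
  | resetT _ ih =>
      rcases hl with _ | _ | _
      rcases hab with _ | _ | _ | _ | _ | h1
      rcases ih h1 .tau with ⟨-, e⟩ | ⟨_, s, e⟩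
      · exact .inl ⟨rfl, .reset e⟩
      · exact .inr ⟨_, .resetT s, .reset e⟩
  | resetCap _ ih =>
      rcases hl with _ | _ | _
      rcases hab with _ | _ | _ | _ | _ | h1
      rcases ih h1 (.ctx (.hole 0)) with ⟨⟨⟩, -⟩ | ⟨_, s, e⟩
      exact .inr ⟨_, .resetCap s, e⟩
  | lamApp hv =>
      obtain ⟨w, rfl⟩ := hv
      rcases hl with _ | ⟨_ | _ | hw⟩ | _
      rcases hab with _ | _ | hc
      exact .inr ⟨_, .lamApp ⟨_, rfl⟩, hc.subst0 (.lam hw)⟩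
  | shiftCap E =>
      rcases hl with _ | _ | ⟨hE⟩
      rcases hab with _ | _ | _ | _ | hs
      exact .inr ⟨_, .shiftCap _, .reset (hs.subst0 hE.er_contOf)⟩
  | capL h ih =>
      rcases hl with _ | _ | ⟨hE⟩
      rcases hab with _ | _ | _ | ⟨h1, h2⟩
      · exact absurd h (value_no_ctx ⟨_, rfl⟩)
      rcases ih h1 (.ctx (.appL hE h2)) with ⟨⟨⟩, -⟩ | ⟨_, s, e⟩
      exact .inr ⟨_, .capL s, e⟩
  | capR h ih =>
      rcases hl with _ | _ | ⟨hE⟩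
      rcases hab with _ | _ | _ | ⟨_ | _ | hc, h2⟩
      · exact absurd h (value_no_ctx ⟨_, rfl⟩)
      rcases ih h2 (.ctx (.appV hc hE)) with ⟨⟨⟩, -⟩ | ⟨_, s, e⟩
      exact .inr ⟨_, .capR s, e⟩

lemma Er.bisim {a b : Tm} (h : Er 0 a b) : Bisim a b := by
  refine ⟨Er 0, ⟨fun x y hxy l x' hs => ?_, fun y x hxy l y' hs => ?_⟩, h⟩
  · obtain ⟨b', s, e⟩ := hxy.step hs (.refl l)
    exact ⟨b', s.weak, e⟩
  · rcases Er.step_rev hs hxy (.refl l) with ⟨rfl, e⟩ | ⟨x', s, e⟩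
    · exact ⟨x, .refl, e⟩
    · exact ⟨x', s.weak, e⟩

lemma er_applySub_Omega (t : Tm) {k : ℕ} {σ : ℕ → Tm} (h1 : ∀ n < k, σ n = var n)
    (h2 : ∀ n, k ≤ n → σ n = OmegaTm) : Er k t (applySub σ t) := by
  induction t generalizing k σ with
  | var n =>
      by_cases h : n < k
      · rw [applySub, h1 n h]; exact .var k n
      · rw [applySub, h2 n (by omega)]; exact .varOmega (by omega)
  | lam t ih | shift t ih =>
      constructor
      refine ih (fun n hn => ?_) (fun n hn => ?_) <;> cases n
      · rfl
      · simp [liftSub, h1 _ (Nat.lt_of_succ_lt_succ hn), LamS.liftT]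
      · omega
      · simp [liftSub, h2 _ (Nat.le_of_succ_le_succ hn), liftT_OmegaTm]
  | app a b iha ihb => exact .app (iha h1 h2) (ihb h1 h2)
  | reset t ih => exact .reset (ih h1 h2)

def eraseFree (t : Tm) : Tm := applySub (fun _ => OmegaTm) t

def PCtx.eraseFree : PCtx → PCtx
  | .hole => .hole
  | .appV b E => .appV (applySub (liftSub fun _ => OmegaTm) b) E.eraseFree
  | .appL E s => .appL E.eraseFree (LamS.eraseFree s)

lemma er_eraseFree (t : Tm) : Er 0 t (eraseFree t) :=
  er_applySub_Omega t (by omega) fun _ _ => rfl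

lemma closed_eraseFree (t : Tm) : Closed (eraseFree t) :=
  closedUnder_applySub t fun _ => closed_OmegaTm

lemma IsValue.eraseFree {v : Tm} (hv : IsValue v) : IsValue (eraseFree v) :=
  hv.applySub _

lemma erP_eraseFree (E : PCtx) : ErP 0 E E.eraseFree := by
  induction E with
  | hole => exact .hole 0
  | appV b E ih =>
      refine .appV (er_applySub_Omega b (fun n hn => ?_) (fun n hn => ?_)) ih <;> cases n
      · rfl
      · omega
      · omega
      · exact liftT_OmegaTm 1 0
  | appL E s ih => exact .appL ih (er_eraseFree s)

lemma pctxClosedUnder_eraseFree (E : PCtx) : PCtxClosedUnder 0 E.eraseFree := by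
  induction E with
  | hole => trivial
  | appV b E ih =>
      refine ⟨closedUnder_applySub b fun n => ?_, ih⟩
      cases n with
      | zero => show 0 < 1; omega
      | succ n => exact (liftT_OmegaTm 1 0).symm ▸ closed_OmegaTm.closedUnder 1
  | appL E s ih => exact ⟨ih, closed_eraseFree s⟩

end Erasure

section Completeness

lemma RedStar.ectx_plug {t u : Tm} (F : ECtx) (h : RedStar t u) : RedStar (F.plug t) (F.plug u) :=
  Relation.ReflTransGen.lift (F.plug ·) (fun _ _ => Red.plug F) _ _ h

lemma ECtxEquiv.symm {t0 t1 : Tm} (h : ECtxEquiv t0 t1) : ECtxEquiv t1 t0 :=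
  fun F hF => ⟨(h F hF).1.symm, (h F hF).2.symm⟩

lemma ECtxEquiv.redStar {t0 t1 u0 u1 : Tm} (h : ECtxEquiv t0 t1) (h0 : RedStar t0 u0)
    (h1 : RedStar t1 u1) : ECtxEquiv u0 u1 := by
  intro F hF
  rw [← evalsToValue_iff_of_redStar (h0.ectx_plug F),
    ← evalsToValue_iff_of_redStar (h1.ectx_plug F), ← evalsToStuck_iff_of_redStar (h0.ectx_plug F),
    ← evalsToStuck_iff_of_redStar (h1.ectx_plug F)]
  exact h F hF

lemma ECtxEquiv.plug {t0 t1 : Tm} (h : ECtxEquiv t0 t1) {G : ECtx} (hG : ClosedECtx G) :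
    ECtxEquiv (G.plug t0) (G.plug t1) := by
  intro F hF
  rw [← ECtx.plug_comp, ← ECtx.plug_comp]
  exact h (F.comp G) (hF.comp hG)

lemma ECtxEquiv.subst_of_lam {c0 c1 v : Tm} (h : ECtxEquiv (lam c0) (lam c1)) (hv : IsValue v)
    (hcv : Closed v) : ECtxEquiv (substT 0 v c0) (substT 0 v c1) :=
  (h.plug (G := .appL .hole v) ⟨trivial, hcv⟩).redStar (.single (.beta .hole _ _ hv))
    (.single (.beta .hole _ _ hv))

lemma ECtxEquiv.capture {E₀ E₁ E : PCtx} {s0 s1 : Tm}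
    (h : ECtxEquiv (E₀.plug (shift s0)) (E₁.plug (shift s1))) (hE : PCtxClosedUnder 0 E) :
    ECtxEquiv (reset (substT 0 (contOf (E.comp E₀)) s0))
      (reset (substT 0 (contOf (E.comp E₁)) s1)) := by
  have hG : ClosedECtx ((ECtx.resetC .hole).comp E.toECtx) := ClosedECtx.comp trivial hE.toECtx
  have hplug (E' : PCtx) (s : Tm) : ((ECtx.resetC .hole).comp E.toECtx).plug (E'.plug (shift s))
      = reset ((E.comp E').plug (shift s)) := by
    rw [ECtx.plug_comp, PCtx.toECtx_plug, PCtx.plug_comp]; rfl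
  have := h.plug hG
  rw [hplug, hplug] at this
  exact this.redStar (.single (.cap .hole _ _)) (.single (.cap .hole _ _))

lemma closed_capture {E₀ E : PCtx} {s : Tm} (hc : Closed (E₀.plug (shift s)))
    (hE : PCtxClosedUnder 0 E) : Closed (reset (substT 0 (contOf (E.comp E₀)) s)) := by
  obtain ⟨hE₀, hs⟩ := (closedUnder_plug_iff E₀ (shift s) 0).1 hc
  exact closedUnder_substT hs (closed_contOf (hE.comp hE₀))

lemma bisim_substT_eraseFree (c v : Tm) : Bisim (substT 0 v c) (substT 0 (eraseFree v) c) :=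
  ((Er.refl c 1).subst0 (er_eraseFree v)).bisim

lemma bisim_capture_eraseFree (E E₀ : PCtx) (s : Tm) :
    Bisim (reset (substT 0 (contOf (E.comp E₀)) s))
      (reset (substT 0 (contOf (E.eraseFree.comp E₀)) s)) :=
  (Er.reset ((Er.refl s 1).subst0 ((erP_eraseFree E).comp (ErP.refl E₀ 0)).er_contOf)).bisim

def ECtxEquivUpToBisim (a b : Tm) : Prop :=
  ∃ a₀ b₀, Bisim a a₀ ∧ Closed a₀ ∧ Closed b₀ ∧ ECtxEquiv a₀ b₀ ∧ Bisim b₀ b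

lemma ECtxEquivUpToBisim.symm {a b : Tm} (h : ECtxEquivUpToBisim a b) : ECtxEquivUpToBisim b a :=
  let ⟨a₀, b₀, ha, hc0, hc1, h, hb⟩ := h
  ⟨b₀, a₀, hb.symm, hc1, hc0, h.symm, ha.symm⟩

lemma ECtxEquivUpToBisim.bisim_trans {a a' b b' : Tm} (ha : Bisim a a')
    (h : ECtxEquivUpToBisim a' b') (hb : Bisim b' b) : ECtxEquivUpToBisim a b :=
  let ⟨a₀, b₀, ha', hc0, hc1, h, hb'⟩ := h
  ⟨a₀, b₀, ha.trans ha', hc0, hc1, h, hb'.trans hb⟩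

/-- The value on the right comes from evaluating `b₀`; the argument is closed by erasure so
that `≡E`, which only tests closed contexts, can be applied to it. -/
lemma ECtxEquiv.weak_val {a₀ b₀ x v : Tm} (hc0 : Closed a₀) (hc1 : Closed b₀)
    (h : ECtxEquiv a₀ b₀) (hw : Weak a₀ (.val v) x) :
    ∃ y, Weak b₀ (.val v) y ∧ ECtxEquivUpToBisim x y := by
  obtain ⟨u, hts, hstep⟩ := hw
  obtain ⟨c0, rfl, hv, rfl⟩ := step_val_inv hstep
  have hr0 : RedStar a₀ (lam c0) := tauStar_iff_redStar.1 hts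
  obtain ⟨_, ⟨c1, rfl⟩, hr1, -⟩ := ((h .hole trivial).1).1
    ((evalsToValue_iff_of_redStar hr0).2 (IsValue.evalsToValue ⟨c0, rfl⟩))
  refine ⟨substT 0 v c1, ⟨lam c1, tauStar_iff_redStar.2 hr1, .lamApp hv⟩,
    substT 0 (eraseFree v) c0, substT 0 (eraseFree v) c1, bisim_substT_eraseFree c0 v,
    closedUnder_substT (hr0.closed hc0) (closed_eraseFree v),
    closedUnder_substT (hr1.closed hc1) (closed_eraseFree v), ?_,
    (bisim_substT_eraseFree c1 v).symm⟩
  exact (h.redStar hr0 hr1).subst_of_lam hv.eraseFree (closed_eraseFree v)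

lemma ECtxEquiv.weak_ctx {a₀ b₀ x : Tm} {E : PCtx} (hc0 : Closed a₀) (hc1 : Closed b₀)
    (h : ECtxEquiv a₀ b₀) (hw : Weak a₀ (.ctx E) x) :
    ∃ y, Weak b₀ (.ctx E) y ∧ ECtxEquivUpToBisim x y := by
  obtain ⟨u, hts, hstep⟩ := hw
  obtain ⟨E₀, s0, rfl, rfl⟩ := step_ctx_inv hstep
  have hr0 : RedStar a₀ (E₀.plug (shift s0)) := tauStar_iff_redStar.1 hts
  obtain ⟨_, hst, hr1, -⟩ := ((h .hole trivial).2).1 ((evalsToStuck_iff_of_redStar hr0).2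
    ⟨_, stuck_plug_shift E₀ s0, .refl, irred_plug_shift E₀ s0⟩)
  obtain ⟨E₁, s1, rfl⟩ := hst.eq_plug_shift (hr1.closed hc1)
  have hE := pctxClosedUnder_eraseFree E
  refine ⟨_, ⟨_, tauStar_iff_redStar.2 hr1, step_plug_shift E₁ s1 E⟩, _, _,
    bisim_capture_eraseFree E E₀ s0, closed_capture (hr0.closed hc0) hE,
    closed_capture (hr1.closed hc1) hE, (h.redStar hr0 hr1).capture hE,
    (bisim_capture_eraseFree E E₁ s1).symm⟩

lemma ECtxEquiv.weak {a₀ b₀ x : Tm} {l : Label} (hc0 : Closed a₀) (hc1 : Closed b₀)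
    (h : ECtxEquiv a₀ b₀) (hw : Weak a₀ l x) : ∃ y, Weak b₀ l y ∧ ECtxEquivUpToBisim x y := by
  cases l with
  | tau =>
      have hr0 := tauStar_iff_redStar.1 hw
      exact ⟨b₀, .refl, x, b₀, .refl x, hr0.closed hc0, hc1, h.redStar hr0 .refl, .refl b₀⟩
  | val v => exact h.weak_val hc0 hc1 hw
  | ctx E => exact h.weak_ctx hc0 hc1 hw

lemma isSim_ectxEquivUpToBisim : IsSim ECtxEquivUpToBisim := by
  rintro a b ⟨a₀, b₀, ha, hc0, hc1, h, hb⟩ l a' hs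
  obtain ⟨x, hax, ha'x⟩ := ha.weak hs.weak
  obtain ⟨y, hby, hxy⟩ := h.weak hc0 hc1 hax
  obtain ⟨b', hbb', hyb'⟩ := hb.weak hby
  exact ⟨b', hbb', .bisim_trans ha'x hxy hyb'⟩

lemma ECtxEquiv.bisim {t0 t1 : Tm} (hc0 : Closed t0) (hc1 : Closed t1) (h : ECtxEquiv t0 t1) :
    Bisim t0 t1 :=
  ⟨ECtxEquivUpToBisim, .of_symm (fun _ _ => ECtxEquivUpToBisim.symm) isSim_ectxEquivUpToBisim,
    t0, t1, .refl t0, hc0, hc1, h, .refl t1⟩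

end Completeness

section HoweClosure

lemma Howe.refl (t : Tm) : Howe t t := by
  induction t with
  | var n => exact .compVar n
  | lam _ ih => exact .compLam ih
  | app _ _ iha ihb => exact .compApp iha ihb
  | shift _ ih => exact .compShift ih
  | reset _ ih => exact .compReset ih

lemma openExt_bisim_refl (t : Tm) : OpenExt Bisim t t := fun _ _ => .refl _

lemma OpenExt.bisim_trans {a b c : Tm} (h1 : OpenExt Bisim a b) (h2 : OpenExt Bisim b c) :
    OpenExt Bisim a c := fun σ hσ => (h1 σ hσ).trans (h2 σ hσ)

lemma Bisim.openExt {a b : Tm} (hca : Closed a) (hcb : Closed b) (h : Bisim a b) :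
    OpenExt Bisim a b := by
  intro σ _
  rwa [applySub_of_closed hca, applySub_of_closed hcb]

/-- Unlike `ClosingSub`, this is stable under `liftSub`, as the induction for `Howe` needs. -/
def IsValueSub (σ : ℕ → Tm) : Prop := ∀ n, IsValue (σ n) ∨ σ n = var n

lemma ClosingSub.isValueSub {σ : ℕ → Tm} (h : ClosingSub σ) : IsValueSub σ :=
  fun n => .inl (h n).1

lemma IsValueSub.liftSub {σ : ℕ → Tm} (h : IsValueSub σ) : IsValueSub (liftSub σ) := by
  intro n
  cases n with
  | zero => exact .inr rfl
  | succ n =>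
      rcases h n with hv | he
      · exact .inl (hv.liftT 1 0)
      · exact .inr (by simp [LamS.liftSub, he, liftT])

lemma ClosingSub.comp {σ' σ : ℕ → Tm} (h' : ClosingSub σ') (h : IsValueSub σ) :
    ClosingSub (fun n => applySub σ' (σ n)) := by
  intro n
  rcases h n with hv | he
  · exact ⟨hv.applySub σ', closed_applySub h' _⟩
  · simpa only [he, LamS.applySub] using h' n

lemma OpenExt.subst_valueSub {a b : Tm} (h : OpenExt Bisim a b) {σ : ℕ → Tm} (hσ : IsValueSub σ) :
    OpenExt Bisim (applySub σ a) (applySub σ b) := by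
  intro σ' hσ'
  rw [applySub_applySub, applySub_applySub]
  exact h _ (hσ'.comp hσ)

lemma OpenExt.lift {a b : Tm} (h : OpenExt Bisim a b) (d c : ℕ) :
    OpenExt Bisim (liftT d c a) (liftT d c b) := by
  intro σ hσ
  rw [liftT_eq_renT, liftT_eq_renT, applySub_renT, applySub_renT]
  exact h _ fun n => hσ _

lemma OpenExt.subst {a b w : Tm} (h : OpenExt Bisim a b) (hw : IsValue w) (j : ℕ) :
    OpenExt Bisim (substT j w a) (substT j w b) := by
  intro σ hσ
  rw [applySub_substT, applySub_substT]
  refine h _ fun n => ?_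
  split_ifs
  · exact ⟨(hw.liftT j 0).applySub σ, closed_applySub hσ _⟩
  all_goals exact hσ _

lemma Howe.lift {a b : Tm} (h : Howe a b) (d c : ℕ) : Howe (liftT d c a) (liftT d c b) := by
  induction h generalizing c with
  | base h => exact .base (h.lift d c)
  | right _ h2 ih => exact .right (ih c) (h2.lift d c)
  | compVar n => simp only [LamS.liftT]; split <;> exact .compVar _
  | compLam _ ih => exact .compLam (ih _)
  | compApp _ _ ih1 ih2 => exact .compApp (ih1 c) (ih2 c)
  | compShift _ ih => exact .compShift (ih _)
  | compReset _ ih => exact .compReset (ih c)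

lemma Howe.subst_valueSub {a b : Tm} (h : Howe a b) {σ : ℕ → Tm} (hσ : IsValueSub σ) :
    Howe (applySub σ a) (applySub σ b) := by
  induction h generalizing σ with
  | base h => exact .base (h.subst_valueSub hσ)
  | right _ h2 ih => exact .right (ih hσ) (h2.subst_valueSub hσ)
  | compVar n => exact .refl _
  | compLam _ ih => exact .compLam (ih hσ.liftSub)
  | compApp _ _ ih1 ih2 => exact .compApp (ih1 hσ) (ih2 hσ)
  | compShift _ ih => exact .compShift (ih hσ.liftSub)
  | compReset _ ih => exact .compReset (ih hσ)

lemma Howe.subst_right {v w : Tm} (hvw : Howe v w) (x : Tm) (j : ℕ) :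
    Howe (substT j v x) (substT j w x) := by
  induction x generalizing j with
  | var n =>
      simp only [LamS.substT]
      split_ifs
      · exact hvw.lift j 0
      all_goals exact .compVar _
  | lam _ ih => exact .compLam (ih _)
  | app _ _ iha ihb => exact .compApp (iha j) (ihb j)
  | shift _ ih => exact .compShift (ih _)
  | reset _ ih => exact .compReset (ih j)

/-- The `OpenExt Bisim` steps survive because `w` is a value: open extensions quantify over
value substitutions only. -/
lemma Howe.subst {a b : Tm} (h : Howe a b) {v w : Tm} (hvw : Howe v w) (hw : IsValue w) (j : ℕ) :
    Howe (substT j v a) (substT j w b) := by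
  induction h generalizing j with
  | base h => exact .right (hvw.subst_right _ j) (h.subst hw j)
  | right _ h2 ih => exact .right (ih j) (h2.subst hw j)
  | compVar n => exact hvw.subst_right _ j
  | compLam _ ih => exact .compLam (ih _)
  | compApp _ _ ih1 ih2 => exact .compApp (ih1 j) (ih2 j)
  | compShift _ ih => exact .compShift (ih _)
  | compReset _ ih => exact .compReset (ih j)

end HoweClosure

section HoweInversion

lemma Howe.lam_inv {a c : Tm} (h : Howe (lam a) c) :
    ∃ a', Howe a a' ∧ OpenExt Bisim (lam a') c := by
  generalize ht : lam a = t at h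
  induction h with
  | base h => subst ht; exact ⟨a, .refl a, h⟩
  | right _ h2 ih =>
      obtain ⟨a', h3, h4⟩ := ih ht
      exact ⟨a', h3, h4.bisim_trans h2⟩
  | compLam h => cases ht; exact ⟨_, h, openExt_bisim_refl _⟩
  | _ => cases ht

lemma Howe.shift_inv {a c : Tm} (h : Howe (shift a) c) :
    ∃ a', Howe a a' ∧ OpenExt Bisim (shift a') c := by
  generalize ht : shift a = t at h
  induction h with
  | base h => subst ht; exact ⟨a, .refl a, h⟩
  | right _ h2 ih =>
      obtain ⟨a', h3, h4⟩ := ih ht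
      exact ⟨a', h3, h4.bisim_trans h2⟩
  | compShift h => cases ht; exact ⟨_, h, openExt_bisim_refl _⟩
  | _ => cases ht

lemma Howe.reset_inv {a c : Tm} (h : Howe (reset a) c) :
    ∃ a', Howe a a' ∧ OpenExt Bisim (reset a') c := by
  generalize ht : reset a = t at h
  induction h with
  | base h => subst ht; exact ⟨a, .refl a, h⟩
  | right _ h2 ih =>
      obtain ⟨a', h3, h4⟩ := ih ht
      exact ⟨a', h3, h4.bisim_trans h2⟩
  | compReset h => cases ht; exact ⟨_, h, openExt_bisim_refl _⟩
  | _ => cases ht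

lemma Howe.app_inv {x y c : Tm} (h : Howe (app x y) c) :
    ∃ x' y', Howe x x' ∧ Howe y y' ∧ OpenExt Bisim (app x' y') c := by
  generalize ht : app x y = t at h
  induction h with
  | base h => subst ht; exact ⟨x, y, .refl x, .refl y, h⟩
  | right _ h2 ih =>
      obtain ⟨x', y', h3, h4, h5⟩ := ih ht
      exact ⟨x', y', h3, h4, h5.bisim_trans h2⟩
  | compApp h1 h2 => cases ht; exact ⟨_, _, h1, h2, openExt_bisim_refl _⟩
  | _ => cases ht

def closeById : ℕ → Tm := fun _ => lam (var 0)

lemma closingSub_closeById : ClosingSub closeById :=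
  fun _ => ⟨⟨_, rfl⟩, show 0 < 1 by omega⟩

lemma OpenExt.bisim_of_closed {a b : Tm} (h : OpenExt Bisim a b) (hb : Closed b) :
    Bisim (applySub closeById a) b := by
  simpa only [applySub_of_closed hb] using h _ closingSub_closeById

lemma Howe.closeRight {x p : Tm} (hx : Closed x) (h : Howe x p) :
    HoweC x (applySub closeById p) := by
  refine ⟨hx, closed_applySub closingSub_closeById p, ?_⟩
  simpa only [applySub_of_closed hx] using h.subst_valueSub closingSub_closeById.isValueSub

lemma Howe.closeRight_under_binder {x p : Tm} (hx : ClosedUnder 1 x) (h : Howe x p) :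
    ClosedUnder 1 (applySub (liftSub closeById) p) ∧ Howe x (applySub (liftSub closeById) p) := by
  refine ⟨closedUnder_applySub p fun n => ?_, ?_⟩
  · cases n with
    | zero => show 0 < 1; omega
    | succ n => exact closedUnder_liftT (n := 0) 1 le_rfl (closingSub_closeById n).2
  · have hfix : ∀ n < 1, liftSub closeById n = var n := by
      intro n hn
      obtain rfl : n = 0 := by omega
      rfl
    simpa only [applySub_of_closedUnder hx hfix] using
      h.subst_valueSub closingSub_closeById.isValueSub.liftSub

lemma HoweC.app_inv {x y b : Tm} (h : HoweC (app x y) b) :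
    ∃ p q, HoweC x p ∧ HoweC y q ∧ Bisim (app p q) b := by
  obtain ⟨p, q, hp, hq, hb⟩ := h.2.2.app_inv
  exact ⟨_, _, hp.closeRight h.1.1, hq.closeRight h.1.2, hb.bisim_of_closed h.2.1⟩

lemma HoweC.reset_inv {x b : Tm} (h : HoweC (reset x) b) : ∃ p, HoweC x p ∧ Bisim (reset p) b := by
  obtain ⟨p, hp, hb⟩ := h.2.2.reset_inv
  exact ⟨_, hp.closeRight h.1, hb.bisim_of_closed h.2.1⟩

lemma HoweC.lam_inv {c b : Tm} (h : HoweC (lam c) b) :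
    ∃ c', ClosedUnder 1 c' ∧ Howe c c' ∧ Bisim (lam c') b := by
  obtain ⟨c', hc, hb⟩ := h.2.2.lam_inv
  exact ⟨_, (hc.closeRight_under_binder h.1).1, (hc.closeRight_under_binder h.1).2,
    hb.bisim_of_closed h.2.1⟩

lemma HoweC.shift_inv {s b : Tm} (h : HoweC (shift s) b) :
    ∃ s', ClosedUnder 1 s' ∧ Howe s s' ∧ Bisim (shift s') b := by
  obtain ⟨s', hs, hb⟩ := h.2.2.shift_inv
  exact ⟨_, (hs.closeRight_under_binder h.1).1, (hs.closeRight_under_binder h.1).2,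
    hb.bisim_of_closed h.2.1⟩

/-- Applying `lam c'` and its bisimilar partner `p` to the same closed value shows, by
determinism of evaluation, that the body `p` evaluates to agrees with `c'` under every closing
substitution. -/
lemma HoweC.lam_run {c p : Tm} (h : HoweC (lam c) p) :
    ∃ p1, TauStar p (lam p1) ∧ ClosedUnder 1 p1 ∧ Howe c p1 := by
  obtain ⟨c', hc', hcc', hb⟩ := h.lam_inv
  obtain ⟨_, ⟨u, hts, hstep⟩, -⟩ := hb.weak (Step.lamApp (t := c') (v := lam (var 0)) ⟨_, rfl⟩).weak
  obtain ⟨p1, rfl, -, -⟩ := step_val_inv hstep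
  have hp1 : ClosedUnder 1 p1 := hts.closed h.2.1
  refine ⟨p1, hts, hp1, .right hcc' fun σ hσ => ?_⟩
  rw [applySub_eq_substT hc', applySub_eq_substT hp1]
  obtain ⟨_, ⟨u', hts', hstep'⟩, hbis⟩ := hb.weak (Step.lamApp (t := c') (hσ 0).1).weak
  obtain ⟨p1', rfl, -, rfl⟩ := step_val_inv hstep'
  have hdet : lam p1' = lam p1 := (tauStar_iff_redStar.1 hts').irred_det
    (IsValue.irred ⟨_, rfl⟩) (tauStar_iff_redStar.1 hts) (IsValue.irred ⟨_, rfl⟩)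
  cases hdet
  exact hbis

end HoweInversion

section KeyLemma

def ClosedLabel : Label → Prop
  | .tau => True
  | .val v => Closed v ∧ IsValue v
  | .ctx E => PCtxClosedUnder 0 E

lemma labHowe_tau_inv {l' : Label} (h : LabHowe .tau l') : l' = .tau := by
  cases l' <;> simp_all [LabHowe]

lemma labHowe_val_inv {v : Tm} {l' : Label} (h : LabHowe (.val v) l') :
    ∃ v', l' = .val v' ∧ Closed v ∧ Closed v' ∧ Howe v v' := by
  cases l' <;> simp_all [LabHowe]

lemma labHowe_ctx_inv {E : PCtx} {l' : Label} (h : LabHowe (.ctx E) l') :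
    ∃ E', l' = .ctx E' ∧ PCtxHowe E E' := by
  cases l' <;> simp_all [LabHowe]

lemma Step.closed {a a' : Tm} {l : Label} (h : Step a l a') (hc : Closed a) (hl : ClosedLabel l) :
    Closed a' := by
  cases l with
  | tau => exact h.red.closed hc
  | val v =>
      obtain ⟨c, rfl, -, rfl⟩ := step_val_inv h
      exact closedUnder_substT hc hl.1
  | ctx E =>
      obtain ⟨E₀, s, rfl, rfl⟩ := step_ctx_inv h
      exact closed_capture hc hl

lemma Weak.closed {b b' : Tm} {l : Label} (h : Weak b l b') (hc : Closed b) (hl : ClosedLabel l) :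
    Closed b' := by
  cases l with
  | tau => exact TauStar.closed h hc
  | val _ | ctx _ =>
      obtain ⟨u, hts, hstep⟩ := h
      exact hstep.closed (hts.closed hc) hl

lemma TauStar.ectx_plug (F : ECtx) {t u : Tm} (h : TauStar t u) : TauStar (F.plug t) (F.plug u) :=
  tauStar_iff_redStar.2 ((tauStar_iff_redStar.1 h).ectx_plug F)

lemma PCtxHowe.liftC {E E' : PCtx} (h : PCtxHowe E E') (d c : ℕ) :
    PCtxHowe (E.liftC d c) (E'.liftC d c) := by
  induction h with
  | hole => exact .hole
  | appV hb _ ih => exact .appV (hb.lift d (c + 1)) ih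
  | appL _ hs ih => exact .appL ih (hs.lift d c)

lemma PCtxHowe.plug {E E' : PCtx} (h : PCtxHowe E E') {r r' : Tm} (hr : Howe r r') :
    Howe (E.plug r) (E'.plug r') := by
  induction h generalizing r r' with
  | hole => exact hr
  | appV hb _ ih => exact ih (.compApp (.compLam hb) hr)
  | appL _ hs ih => exact ih (.compApp hr hs)

lemma PCtxHowe.contOf {E E' : PCtx} (h : PCtxHowe E E') : Howe (contOf E) (contOf E') :=
  .compLam (.compReset ((h.liftC 1 0).plug (.compVar 0)))

lemma HoweC.trans_bisim {a m b : Tm} (h : HoweC a m) (hmb : Bisim m b) (hb : Closed b) :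
    HoweC a b :=
  ⟨h.1, hb, .right h.2.2 (hmb.openExt h.2.1 hb)⟩

lemma HoweC.compApp {a a' b b' : Tm} (ha : HoweC a a') (hb : HoweC b b') :
    HoweC (app a b) (app a' b') :=
  ⟨⟨ha.1, hb.1⟩, ⟨ha.2.1, hb.2.1⟩, .compApp ha.2.2 hb.2.2⟩

lemma HoweC.compReset {a a' : Tm} (h : HoweC a a') : HoweC (reset a) (reset a') :=
  ⟨h.1, h.2.1, .compReset h.2.2⟩

lemma HoweC.compLam {c c' : Tm} (hc : ClosedUnder 1 c) (hc' : ClosedUnder 1 c') (h : Howe c c') :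
    HoweC (lam c) (lam c') :=
  ⟨hc, hc', .compLam h⟩

lemma HoweC.subst0 {c c' v v' : Tm} (hc : ClosedUnder 1 c) (hc' : ClosedUnder 1 c') (h : Howe c c')
    (hv : HoweC v v') (hv' : IsValue v') : HoweC (substT 0 v c) (substT 0 v' c') :=
  ⟨closedUnder_substT hc hv.1, closedUnder_substT hc' hv.2.1, h.subst hv.2.2 hv' 0⟩

lemma HoweC.of_bisim_weak {m m' b a' : Tm} {l' : Label} (hmb : Bisim m b) (hb : Closed b)
    (hl' : ClosedLabel l') (hw : Weak m l' m') (h : HoweC a' m') :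
    ∃ b', Weak b l' b' ∧ HoweC a' b' := by
  obtain ⟨b', hwb, hbb'⟩ := hmb.weak hw
  exact ⟨b', hwb, h.trans_bisim hbb' (hwb.closed hb hl')⟩

def HoweSimulates (a : Tm) (l : Label) (a' : Tm) : Prop :=
  ∀ ⦃b : Tm⦄ ⦃l' : Label⦄, HoweC a b → LabHowe l l' → ClosedLabel l → ClosedLabel l' →
    ∃ b', Weak b l' b' ∧ HoweC a' b'

lemma howeSimulates_beta {c v : Tm} (hv : IsValue v) :
    HoweSimulates (app (lam c) v) .tau (substT 0 v c) := by
  intro b l' h hl _ _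
  obtain rfl := labHowe_tau_inv hl
  obtain ⟨p, q, hp, hq, hb⟩ := h.app_inv
  obtain ⟨p1, hpr, hp1, hcp1⟩ := hp.lam_run
  obtain ⟨w, rfl⟩ := hv
  obtain ⟨q1, hqr, hq1, hwq1⟩ := hq.lam_run
  refine HoweC.of_bisim_weak hb h.2.1 trivial ?_
    (.subst0 h.1.1 hp1 hcp1 (.compLam hq.1 hq1 hwq1) ⟨q1, rfl⟩)
  exact ((hpr.ectx_plug (.appL .hole q)).trans (hqr.ectx_plug (.appV p1 .hole))).tail
    (.beta ⟨q1, rfl⟩)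

lemma howeSimulates_resetVal {v : Tm} (hv : IsValue v) : HoweSimulates (reset v) .tau v := by
  intro b l' h hl _ _
  obtain rfl := labHowe_tau_inv hl
  obtain ⟨p, hp, hb⟩ := h.reset_inv
  obtain ⟨w, rfl⟩ := hv
  obtain ⟨p1, hpr, hp1, hwp1⟩ := hp.lam_run
  exact HoweC.of_bisim_weak hb h.2.1 trivial
    ((hpr.ectx_plug (.resetC .hole)).tail (.resetVal ⟨p1, rfl⟩)) (.compLam h.1 hp1 hwp1)

lemma howeSimulates_appL {t0 t0' t1 : Tm} (ih : HoweSimulates t0 .tau t0') :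
    HoweSimulates (app t0 t1) .tau (app t0' t1) := by
  intro b l' h hl _ _
  obtain rfl := labHowe_tau_inv hl
  obtain ⟨p, q, hp, hq, hb⟩ := h.app_inv
  obtain ⟨p', hpr, hp'⟩ := ih (l' := .tau) hp trivial trivial trivial
  exact HoweC.of_bisim_weak hb h.2.1 trivial (hpr.ectx_plug (.appL .hole q))
    (hp'.compApp hq)

lemma howeSimulates_appR {v t t' : Tm} (hv : IsValue v) (ih : HoweSimulates t .tau t') :
    HoweSimulates (app v t) .tau (app v t') := by
  intro b l' h hl _ _
  obtain rfl := labHowe_tau_inv hl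
  obtain ⟨p, q, hp, hq, hb⟩ := h.app_inv
  obtain ⟨w, rfl⟩ := hv
  obtain ⟨p1, hpr, hp1, hwp1⟩ := hp.lam_run
  obtain ⟨q', hqr, hq'⟩ := ih (l' := .tau) hq trivial trivial trivial
  exact HoweC.of_bisim_weak hb h.2.1 trivial
    ((hpr.ectx_plug (.appL .hole q)).trans (hqr.ectx_plug (.appV p1 .hole)))
    ((HoweC.compLam h.1.1 hp1 hwp1).compApp hq')

lemma howeSimulates_resetT {t t' : Tm} (ih : HoweSimulates t .tau t') :
    HoweSimulates (reset t) .tau (reset t') := by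
  intro b l' h hl _ _
  obtain rfl := labHowe_tau_inv hl
  obtain ⟨p, hp, hb⟩ := h.reset_inv
  obtain ⟨p', hpr, hp'⟩ := ih (l' := .tau) hp trivial trivial trivial
  exact HoweC.of_bisim_weak hb h.2.1 trivial (hpr.ectx_plug (.resetC .hole))
    hp'.compReset

lemma howeSimulates_resetCap {t t' : Tm} (ih : HoweSimulates t (.ctx .hole) t') :
    HoweSimulates (reset t) .tau t' := by
  intro b l' h hl _ _
  obtain rfl := labHowe_tau_inv hl
  obtain ⟨p, hp, hb⟩ := h.reset_inv
  obtain ⟨p', ⟨u, hts, hstep⟩, hp'⟩ := ih (l' := .ctx .hole) hp PCtxHowe.hole trivial trivial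
  exact HoweC.of_bisim_weak hb h.2.1 trivial
    ((hts.ectx_plug (.resetC .hole)).tail (.resetCap hstep)) hp'

lemma howeSimulates_lamApp {c v : Tm} : HoweSimulates (lam c) (.val v) (substT 0 v c) := by
  intro b l' h hl _ hl'
  obtain ⟨v', rfl, hcv, hcv', hvv'⟩ := labHowe_val_inv hl
  obtain ⟨c', hc', hcc', hb⟩ := h.lam_inv
  exact HoweC.of_bisim_weak hb h.2.1 hl' (Step.lamApp hl'.2).weak
    (.subst0 h.1 hc' hcc' ⟨hcv, hcv', hvv'⟩ hl'.2)

lemma howeSimulates_shiftCap {s : Tm} (E : PCtx) :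
    HoweSimulates (shift s) (.ctx E) (reset (substT 0 (contOf E) s)) := by
  intro b l' h hl hlE hl'
  obtain ⟨E', rfl, hEE'⟩ := labHowe_ctx_inv hl
  obtain ⟨s', hs', hss', hb⟩ := h.shift_inv
  exact HoweC.of_bisim_weak hb h.2.1 hl' (Step.shiftCap E').weak
    (HoweC.subst0 h.1 hs' hss' ⟨closed_contOf hlE, closed_contOf hl', hEE'.contOf⟩
      ⟨_, rfl⟩).compReset

lemma howeSimulates_capL {t0 t0' t1 : Tm} {E : PCtx}
    (ih : HoweSimulates t0 (.ctx (.appL E t1)) t0') :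
    HoweSimulates (app t0 t1) (.ctx E) t0' := by
  intro b l' h hl hlE hl'
  obtain ⟨E', rfl, hEE'⟩ := labHowe_ctx_inv hl
  obtain ⟨p, q, hp, hq, hb⟩ := h.app_inv
  obtain ⟨p', ⟨u, hts, hstep⟩, hp'⟩ :=
    ih (l' := .ctx (.appL E' q)) hp (.appL hEE' hq.2.2) ⟨hlE, h.1.2⟩ ⟨hl', hq.2.1⟩
  exact HoweC.of_bisim_weak hb h.2.1 hl' ⟨app u q, hts.ectx_plug (.appL .hole q), .capL hstep⟩ hp'

lemma howeSimulates_capR {c t t' : Tm} {E : PCtx} (ih : HoweSimulates t (.ctx (.appV c E)) t') :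
    HoweSimulates (app (lam c) t) (.ctx E) t' := by
  intro b l' h hl hlE hl'
  obtain ⟨E', rfl, hEE'⟩ := labHowe_ctx_inv hl
  obtain ⟨p, q, hp, hq, hb⟩ := h.app_inv
  obtain ⟨p1, hpr, hp1, hcp1⟩ := hp.lam_run
  obtain ⟨q', ⟨u, hts, hstep⟩, hq'⟩ :=
    ih (l' := .ctx (.appV p1 E')) hq (.appV hcp1 hEE') ⟨h.1.1, hlE⟩ ⟨hp1, hl'⟩
  exact HoweC.of_bisim_weak hb h.2.1 hl'
    ⟨app (lam p1) u, (hpr.ectx_plug (.appL .hole q)).trans (hts.ectx_plug (.appV p1 .hole)),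
      .capR hstep⟩ hq'

lemma Step.howeSimulates {a a' : Tm} {l : Label} (h : Step a l a') : HoweSimulates a l a' := by
  induction h with
  | beta hv => exact howeSimulates_beta hv
  | resetVal hv => exact howeSimulates_resetVal hv
  | appL _ ih => exact howeSimulates_appL ih
  | appR hv _ ih => exact howeSimulates_appR hv ih
  | resetT _ ih => exact howeSimulates_resetT ih
  | resetCap _ ih => exact howeSimulates_resetCap ih
  | lamApp _ => exact howeSimulates_lamApp
  | shiftCap E => exact howeSimulates_shiftCap E
  | capL _ ih => exact howeSimulates_capL ih
  | capR _ ih => exact howeSimulates_capR ih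

end KeyLemma

section Soundness

lemma HoweC.tauStar {a a' b : Tm} (hts : TauStar a a') (h : HoweC a b) :
    ∃ b', TauStar b b' ∧ HoweC a' b' := by
  induction hts with
  | refl => exact ⟨b, .refl, h⟩
  | tail _ hstep ih =>
      obtain ⟨b', hbb', h'⟩ := ih
      obtain ⟨b'', hb'b'', h''⟩ := hstep.howeSimulates (l' := .tau) h' trivial trivial trivial
      exact ⟨b'', hbb'.trans hb'b'', h''⟩

lemma HoweC.evalsToValue {a b : Tm} (h : HoweC a b) (ha : EvalsToValue a) : EvalsToValue b := by
  obtain ⟨_, ⟨c, rfl⟩, hred, -⟩ := ha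
  obtain ⟨b', hbb', h'⟩ := h.tauStar (tauStar_iff_redStar.2 hred)
  obtain ⟨p1, hpr, -⟩ := h'.lam_run
  exact ⟨lam p1, ⟨p1, rfl⟩, tauStar_iff_redStar.1 (hbb'.trans hpr), IsValue.irred ⟨p1, rfl⟩⟩

lemma HoweC.evalsToStuck {a b : Tm} (h : HoweC a b) (ha : EvalsToStuck a) : EvalsToStuck b := by
  obtain ⟨s, hs, hred, -⟩ := ha
  obtain ⟨b', hbb', h'⟩ := h.tauStar (tauStar_iff_redStar.2 hred)
  obtain ⟨E₀, s0, rfl⟩ := hs.eq_plug_shift h'.1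
  obtain ⟨_, ⟨u, hts, hstep⟩, -⟩ :=
    (step_plug_shift E₀ s0 .hole).howeSimulates (l' := .ctx .hole) h' PCtxHowe.hole trivial trivial
  obtain ⟨E₁, s1, rfl, -⟩ := step_ctx_inv hstep
  exact ⟨_, stuck_plug_shift E₁ s1, tauStar_iff_redStar.1 (hbb'.trans hts), irred_plug_shift E₁ s1⟩

lemma Bisim.howe_ctx_plug {t0 t1 : Tm} (h : Bisim t0 t1) (hc0 : Closed t0) (hc1 : Closed t1)
    (C : Ctx) : Howe (C.plug t0) (C.plug t1) := by
  induction C with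
  | hole => exact .base (h.openExt hc0 hc1)
  | lam _ ih => exact .compLam ih
  | appL _ s ih => exact .compApp ih (.refl s)
  | appR s _ ih => exact .compApp (.refl s) ih
  | shift _ ih => exact .compShift ih
  | reset _ ih => exact .compReset ih

lemma CtxClosedUnder.plug {C : Ctx} {n : ℕ} {t : Tm} (hC : CtxClosedUnder n C)
    (ht : ClosedUnder n t) : ClosedUnder n (C.plug t) := by
  induction C generalizing n with
  | hole => exact ht
  | lam _ ih | shift _ ih => exact ih hC (closedUnder_mono (by omega) ht)
  | appL _ _ ih => exact ⟨ih hC.1 ht, hC.2⟩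
  | appR _ _ ih => exact ⟨hC.1, ih hC.2 ht⟩
  | reset _ ih => exact ih hC ht

lemma Bisim.howeC_ctx_plug {t0 t1 : Tm} (h : Bisim t0 t1) (hc0 : Closed t0) (hc1 : Closed t1)
    {C : Ctx} (hC : ClosedCtx C) : HoweC (C.plug t0) (C.plug t1) :=
  ⟨hC.plug hc0, hC.plug hc1, h.howe_ctx_plug hc0 hc1 C⟩

theorem Bisim.ctxEquiv {t0 t1 : Tm} (hc0 : Closed t0) (hc1 : Closed t1) (h : Bisim t0 t1) :
    CtxEquiv t0 t1 := by
  intro C hC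
  have h01 := h.howeC_ctx_plug hc0 hc1 hC
  have h10 := h.symm.howeC_ctx_plug hc1 hc0 hC
  exact ⟨⟨h01.evalsToValue, h10.evalsToValue⟩, ⟨h01.evalsToStuck, h10.evalsToStuck⟩⟩

end Soundness

section EvaluationContexts

def Ctx.comp : Ctx → Ctx → Ctx
  | .hole, D => D
  | .lam C, D => .lam (C.comp D)
  | .appL C s, D => .appL (C.comp D) s
  | .appR s C, D => .appR s (C.comp D)
  | .shift C, D => .shift (C.comp D)
  | .reset C, D => .reset (C.comp D)

lemma Ctx.plug_comp (C D : Ctx) (t : Tm) : (C.comp D).plug t = C.plug (D.plug t) := by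
  induction C with
  | hole => rfl
  | lam C ih | shift C ih | reset C ih | appL C _ ih | appR _ C ih =>
      simp only [Ctx.comp, Ctx.plug, ih]

lemma CtxClosedUnder.comp {C D : Ctx} {n : ℕ} (hC : CtxClosedUnder n C)
    (hD : ∀ m, CtxClosedUnder m D) : CtxClosedUnder n (C.comp D) := by
  induction C generalizing n with
  | hole => exact hD n
  | lam _ ih | shift _ ih | reset _ ih => exact ih hC
  | appL _ _ ih => exact ⟨ih hC.1, hC.2⟩
  | appR _ _ ih => exact ⟨hC.1, ih hC.2⟩

def ECtx.toCtx : ECtx → Ctx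
  | .hole => .hole
  | .appV b F => F.toCtx.comp (.appR (lam b) .hole)
  | .appL F s => F.toCtx.comp (.appL .hole s)
  | .resetC F => F.toCtx.comp (.reset .hole)

lemma ECtx.toCtx_plug (F : ECtx) (t : Tm) : F.toCtx.plug t = F.plug t := by
  induction F generalizing t with
  | hole => rfl
  | appV _ _ ih | appL _ _ ih | resetC _ ih => rw [ECtx.toCtx, Ctx.plug_comp, ih]; rfl

lemma ClosedECtx.toCtx {F : ECtx} (hF : ClosedECtx F) : ClosedCtx F.toCtx := by
  induction F with
  | hole => trivial
  | appV b F ih => exact (ih hF.2).comp fun m => ⟨closedUnder_mono (by omega) hF.1, trivial⟩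
  | appL F s ih => exact (ih hF.1).comp fun m => ⟨trivial, hF.2.closedUnder m⟩
  | resetC F ih => exact (ih hF).comp fun m => trivial

lemma CtxEquiv.ectxEquiv {t0 t1 : Tm} (h : CtxEquiv t0 t1) : ECtxEquiv t0 t1 := by
  intro F hF
  simpa only [ECtx.toCtx_plug] using h F.toCtx hF.toCtx

end EvaluationContexts

end LamS

open LamS LamS.Tm in
/-- context lemma: contextual equivalence, evaluation-context
    equivalence, and applicative bisimilarity coincide. -/
theorem context_lemma :
    ∀ t0 t1 : Tm, Closed t0 → Closed t1 →
      ((CtxEquiv t0 t1 ↔ ECtxEquiv t0 t1) ∧ (ECtxEquiv t0 t1 ↔ Bisim t0 t1)) := by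
  intro t0 t1 hc0 hc1
  have hE : ECtxEquiv t0 t1 → Bisim t0 t1 := ECtxEquiv.bisim hc0 hc1
  have hB : Bisim t0 t1 → CtxEquiv t0 t1 := Bisim.ctxEquiv hc0 hc1
  exact ⟨⟨CtxEquiv.ectxEquiv, hB ∘ hE⟩, ⟨hE, CtxEquiv.ectxEquiv ∘ hB⟩⟩
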